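/- arXiv:1308.5381 — 7 statements merged into one kernel-verified Lean document; each statement's English description precedes it below -/
import Mathlib

section
/- If a group G acts freely on the real line by orientation-preserving homeomorphisms, then G is abelian. -/
/-!
Freeness and the intermediate value theorem make every nontrivial element move all points of ℝ
in the same direction, so comparing `ρ g 0` with `ρ h 0` is a linear order on `G` invariant under
multiplication on both sides. It is Archimedean, because a bounded orbit of a homeomorphism
without fixed points would converge to a fixed point. An Archimedean bi-ordered group is abelian:
if there is a least element `ε > 1`, every element is a power of `ε`; otherwise every `ε > 1`
dominates some `γ * γ` with `γ > 1`, whereas squeezing `a` and `b` between consecutive powers of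
`γ` shows that the commutator `(b * a)⁻¹ * (a * b)` lies below `γ * γ` for every `γ > 1`.
-/

section BiOrderedGroup

variable {G : Type*} [Group G] [LinearOrder G] [MulLeftMono G] [MulRightMono G]

theorem exists_zpow_le_lt_zpow_add_one (harch : ∀ g ε : G, 1 < ε → ∃ n : ℕ, g < ε ^ n)
    (g : G) {ε : G} (hε : 1 < ε) : ∃ p : ℤ, ε ^ p ≤ g ∧ g < ε ^ (p + 1) := by
  classical
  obtain ⟨m, hm⟩ := harch g⁻¹ ε hε
  have hbelow : ε ^ (-(m : ℤ)) < g := by rwa [zpow_neg, zpow_natCast, inv_lt']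
  have hex : ∃ k : ℕ, g < ε ^ ((k : ℤ) - m) := by
    obtain ⟨n, hn⟩ := harch g ε hε
    exact ⟨n + m, by simpa using hn⟩
  obtain ⟨j, hj⟩ : ∃ j, Nat.find hex = j + 1 :=
    Nat.exists_eq_succ_of_ne_zero fun h0 => (Nat.find_spec hex).not_gt (by simpa [h0] using hbelow)
  refine ⟨(j : ℤ) - m, not_lt.mp (Nat.find_min hex (by omega)), ?_⟩
  have := Nat.find_spec hex
  rw [hj] at this
  convert this using 2
  push_cast; ring

theorem exists_eq_zpow_of_isLeast (harch : ∀ g ε : G, 1 < ε → ∃ n : ℕ, g < ε ^ n)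
    {ε : G} (hε : IsLeast {h : G | 1 < h} ε) (g : G) : ∃ p : ℤ, g = ε ^ p := by
  obtain ⟨p, hle, hlt⟩ := exists_zpow_le_lt_zpow_add_one harch g hε.1
  refine ⟨p, (inv_mul_eq_one.mp ?_).symm⟩
  have hle' : 1 ≤ (ε ^ p)⁻¹ * g := by rwa [le_inv_mul_iff_mul_le, mul_one]
  have hlt' : (ε ^ p)⁻¹ * g < ε := by rwa [inv_mul_lt_iff_lt_mul, ← zpow_add_one]
  exact hle'.eq_or_lt.resolve_right (fun h1 => (hε.2 h1).not_gt hlt') |>.symm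

theorem exists_one_lt_mul_self_le {δ ε : G} (hδ : 1 < δ) (hδε : δ < ε) :
    ∃ γ : G, 1 < γ ∧ γ * γ ≤ ε := by
  by_cases hsq : δ * δ ≤ ε
  · exact ⟨δ, hδ, hsq⟩
  refine ⟨δ⁻¹ * ε, by rwa [lt_inv_mul_iff_mul_lt, mul_one], ?_⟩
  have hγδ : δ⁻¹ * ε < δ := by rwa [inv_mul_lt_iff_lt_mul, ← not_le]
  calc δ⁻¹ * ε * (δ⁻¹ * ε) ≤ δ * (δ⁻¹ * ε) := (mul_le_mul_iff_right _).mpr hγδ.le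
    _ = ε := mul_inv_cancel_left δ ε

theorem inv_mul_mul_lt_mul_self (harch : ∀ g ε : G, 1 < ε → ∃ n : ℕ, g < ε ^ n)
    {δ : G} (hδ : 1 < δ) (a b : G) : (b * a)⁻¹ * (a * b) < δ * δ := by
  obtain ⟨p, hpa, hap⟩ := exists_zpow_le_lt_zpow_add_one harch a hδ
  obtain ⟨q, hqb, hbq⟩ := exists_zpow_le_lt_zpow_add_one harch b hδ
  calc (b * a)⁻¹ * (a * b) < (δ ^ q * δ ^ p)⁻¹ * (δ ^ (p + 1) * δ ^ (q + 1)) :=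
        mul_lt_mul_of_le_of_lt (inv_le_inv_iff.mpr (mul_le_mul' hqb hpa)) (Left.mul_lt_mul hap hbq)
    _ = δ * δ := by rw [← sq]; group

theorem mul_le_mul_swap_of_forall_exists_mul_self_le
    (harch : ∀ g ε : G, 1 < ε → ∃ n : ℕ, g < ε ^ n)
    (hsq : ∀ ε : G, 1 < ε → ∃ γ : G, 1 < γ ∧ γ * γ ≤ ε) (a b : G) : a * b ≤ b * a := by
  by_contra! hlt
  obtain ⟨γ, hγ, hγε⟩ := hsq ((b * a)⁻¹ * (a * b)) (by rwa [lt_inv_mul_iff_mul_lt, mul_one])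
  exact (inv_mul_mul_lt_mul_self harch hγ a b).not_ge hγε

-- Mathlib's `MulArchimedean` presupposes commutativity, hence the explicit hypothesis `harch`.
theorem commute_of_forall_lt_pow (harch : ∀ g ε : G, 1 < ε → ∃ n : ℕ, g < ε ^ n) (a b : G) :
    Commute a b := by
  by_cases hmin : ∃ ε : G, IsLeast {h : G | 1 < h} ε
  · obtain ⟨ε, hε⟩ := hmin
    obtain ⟨p, rfl⟩ := exists_eq_zpow_of_isLeast harch hε a
    obtain ⟨q, rfl⟩ := exists_eq_zpow_of_isLeast harch hε b
    exact Commute.zpow_zpow_self ε p q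
  · have hsq : ∀ ε : G, 1 < ε → ∃ γ : G, 1 < γ ∧ γ * γ ≤ ε := fun ε hε => by
      obtain ⟨δ, hδ, hδε⟩ : ∃ δ : G, 1 < δ ∧ δ < ε := by
        by_contra! hge
        exact hmin ⟨ε, hε, hge⟩
      exact exists_one_lt_mul_self_le hδ hδε
    exact le_antisymm (mul_le_mul_swap_of_forall_exists_mul_self_le harch hsq a b)
      (mul_le_mul_swap_of_forall_exists_mul_self_le harch hsq b a)

end BiOrderedGroup

theorem forall_lt_or_forall_gt_of_forall_ne {f : ℝ → ℝ} (hf : Continuous f) (hne : ∀ x, f x ≠ x) :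
    (∀ x, x < f x) ∨ (∀ x, f x < x) := by
  by_contra! h
  obtain ⟨⟨x, hx⟩, ⟨y, hy⟩⟩ := h
  obtain ⟨z, hz⟩ := intermediate_value_univ x y (hf.sub continuous_id)
    ⟨sub_nonpos.mpr hx, sub_nonneg.mpr hy⟩
  exact hne z (sub_eq_zero.mp hz)

theorem exists_lt_iterate_of_forall_lt {f : ℝ → ℝ} (hf : Continuous f) (hlt : ∀ x, x < f x)
    (x C : ℝ) : ∃ n : ℕ, C < f^[n] x := by
  by_contra! hbdd
  have hmono : Monotone fun n => f^[n] x :=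
    monotone_nat_of_le_succ fun n => by
      rw [Function.iterate_succ_apply']; exact (hlt _).le
  have hfix := isFixedPt_of_tendsto_iterate
    (tendsto_atTop_ciSup hmono ⟨C, by rintro _ ⟨n, rfl⟩; exact hbdd n⟩) hf.continuousAt
  exact (hlt _).ne' hfix

section FreeAction

variable {G : Type*} [Group G] {ρ : G →* Equiv.Perm ℝ}

theorem injective_apply_of_free (hfree : ∀ g : G, g ≠ 1 → ∀ x : ℝ, ρ g x ≠ x) (x₀ : ℝ) :
    Function.Injective fun g => ρ g x₀ := by
  intro g h hgh
  by_contra hne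
  refine hfree (h⁻¹ * g) (fun h1 => hne (inv_mul_eq_one.mp h1).symm) x₀ ?_
  simp only at hgh
  simp [hgh]

theorem apply_lt_apply_of_apply_lt_apply (hcont : ∀ g : G, Continuous (ρ g))
    (hmono : ∀ g : G, Monotone (ρ g)) (hfree : ∀ g : G, g ≠ 1 → ∀ x : ℝ, ρ g x ≠ x)
    {g h : G} {x₀ : ℝ} (hlt : ρ g x₀ < ρ h x₀) (x : ℝ) : ρ g x < ρ h x := by
  have hne : g⁻¹ * h ≠ 1 := fun h1 => hlt.ne (by rw [inv_mul_eq_one.mp h1])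
  have hfactor : ∀ y, ρ g (ρ (g⁻¹ * h) y) = ρ h y := fun y => by simp
  have hright : ∀ y, y < ρ (g⁻¹ * h) y := by
    refine (forall_lt_or_forall_gt_of_forall_ne (hcont _) (hfree _ hne)).resolve_right
      fun hleft => hlt.not_ge ?_
    rw [← hfactor]
    exact hmono g (hleft x₀).le
  rw [← hfactor]
  exact (hmono g).strictMono_of_injective (ρ g).injective (hright x)

theorem apply_le_apply_of_apply_le_apply (hcont : ∀ g : G, Continuous (ρ g))
    (hmono : ∀ g : G, Monotone (ρ g)) (hfree : ∀ g : G, g ≠ 1 → ∀ x : ℝ, ρ g x ≠ x)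
    {g h : G} {x₀ : ℝ} (hle : ρ g x₀ ≤ ρ h x₀) (x : ℝ) : ρ g x ≤ ρ h x := by
  rcases hle.eq_or_lt with heq | hlt
  · rw [injective_apply_of_free hfree x₀ heq]
  · exact (apply_lt_apply_of_apply_lt_apply hcont hmono hfree hlt x).le

theorem exists_apply_lt_apply_pow {ε : G} (hcont : Continuous (ρ ε)) (hlt : ∀ x, x < ρ ε x)
    (g : G) (x₀ : ℝ) : ∃ n : ℕ, ρ g x₀ < ρ (ε ^ n) x₀ := by
  simpa only [map_pow, Equiv.Perm.coe_pow] using exists_lt_iterate_of_forall_lt hcont hlt x₀ (ρ g x₀)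

end FreeAction

/-- Hölder's theorem: a group acting freely on the real line by
orientation-preserving homeomorphisms is abelian. -/
theorem holder_abelian (G : Type*) [Group G] (ρ : G →* Equiv.Perm ℝ)
    (hcont : ∀ g : G, Continuous (ρ g))
    (hmono : ∀ g : G, Monotone (ρ g))
    (hfree : ∀ g : G, g ≠ 1 → ∀ x : ℝ, ρ g x ≠ x) :
    ∀ a b : G, a * b = b * a := by
  let _ : LinearOrder G := LinearOrder.lift' (fun g => ρ g 0) (injective_apply_of_free hfree 0)
  have _ : MulLeftMono G := ⟨fun k g h (hgh : ρ g 0 ≤ ρ h 0) =>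
    show ρ (k * g) 0 ≤ ρ (k * h) 0 by simpa using hmono k hgh⟩
  have _ : MulRightMono G := ⟨fun k g h (hgh : ρ g 0 ≤ ρ h 0) =>
    show ρ (g * k) 0 ≤ ρ (h * k) 0 by
      simpa using apply_le_apply_of_apply_le_apply hcont hmono hfree hgh (ρ k 0)⟩
  refine commute_of_forall_lt_pow fun g ε hε => exists_apply_lt_apply_pow (hcont ε) ?_ g 0
  simpa using apply_lt_apply_of_apply_lt_apply hcont hmono hfree hε
end

section
/- Let ψ be a C² diffeomorphism of [0,1) fixing 0 and let φ be a C² diffeomorphism of [0,1) fixing 0 that commutes with ψ². Then φ commutes with ψ. -/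
/-!
Conjugating by `φ`, the map `χ = φ ψ φ⁻¹` satisfies `χ² = ψ²`, so it suffices that `ψ` is the
only square root of `ψ²`. Take `y` with `ψ y < y` (the case `ψ y > y` follows by passing to
inverses) and let `a` be the last fixed point of `ψ` below `y`. By the intermediate value theorem
`χ` and `ψ` cross at some `x₀ ∈ [ψ² y, y]`; then `g = ψ⁻¹ χ` commutes with `f = ψ²` and fixes
`x₀`, and Kopell's lemma gives `g = id` on `[f x₀, x₀] ∋ ψ² y`, whence `χ y = ψ y`.

Kopell's lemma: let `f` be `C²` on `[a, z]` with `f' > 0` and `f x < x` for `x > a`, and let `h`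
be a monotone `C¹` map commuting with `f` and fixing `z`. Then `h` fixes the orbit `fⁿ z → a`, so
`h'(a) = 1`; differentiating `h ∘ fⁿ = fⁿ ∘ h` and using that the distortion of `fⁿ` on the
fundamental domain `[f z, z]` is at most `exp (L (z - a))` (the images `fʲ [f z, z]` are disjoint
and `log f'` is `L`-Lipschitz) yields `h' ≥ exp (-L (z - a))` there. Applied to all iterates of
`g` this is a uniform expansion, which no orbit of `g` moving inside the bounded domain `[f z, z]`
can sustain unless `g = id`.
-/

open Set Filter Topology Function
open scoped NNReal

/-- A `C²` diffeomorphism of the half-open interval `[0,1)` fixing the endpoint `0`. -/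
structure DiffeoIcoTwo where
  toFun : ℝ → ℝ
  invFun : ℝ → ℝ
  mapsTo : Set.MapsTo toFun (Set.Ico (0:ℝ) 1) (Set.Ico (0:ℝ) 1)
  mapsTo_inv : Set.MapsTo invFun (Set.Ico (0:ℝ) 1) (Set.Ico (0:ℝ) 1)
  left_inv : ∀ x ∈ Set.Ico (0:ℝ) 1, invFun (toFun x) = x
  right_inv : ∀ x ∈ Set.Ico (0:ℝ) 1, toFun (invFun x) = x
  fixes_zero : toFun 0 = 0
  contDiff : ContDiffOn ℝ 2 toFun (Set.Ico (0:ℝ) 1)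
  contDiff_inv : ContDiffOn ℝ 2 invFun (Set.Ico (0:ℝ) 1)

section Iterates

variable {α : Type*} {f g : α → α} {s : Set α}

theorem iterate_apply_comm_of_mapsTo (hg : MapsTo g s s) (hcomm : ∀ x ∈ s, f (g x) = g (f x))
    (n : ℕ) : ∀ x ∈ s, f (g^[n] x) = g^[n] (f x) := by
  induction n with
  | zero => exact fun _ _ => rfl
  | succ n ih =>
    intro x hx
    rw [iterate_succ_apply', iterate_succ_apply', hcomm _ (hg.iterate n hx), ih x hx]

theorem MonotoneOn.iterate [Preorder α] (hf : MonotoneOn f s) (hs : MapsTo f s s) (n : ℕ) :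
    MonotoneOn f^[n] s := by
  induction n with
  | zero => exact monotoneOn_id
  | succ n ih =>
    rw [iterate_succ']
    exact hf.comp ih (hs.iterate n)

theorem StrictMonoOn.eq_of_apply_apply_eq [LinearOrder α] (hf : StrictMonoOn f s)
    (hs : MapsTo f s s) {x : α} (hx : x ∈ s) (h : f (f x) = x) : f x = x := by
  rcases lt_trichotomy (f x) x with hlt | heq | hgt
  · have := hf (hs hx) hx hlt
    rw [h] at this
    exact absurd hlt this.not_gt
  · exact heq
  · have := hf hx (hs hx) hgt
    rw [h] at this
    exact absurd hgt this.not_gt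

end Iterates

theorem ContDiffOn.iterate {k : WithTop ℕ∞} {f : ℝ → ℝ} {s : Set ℝ} (hf : ContDiffOn ℝ k f s)
    (hs : MapsTo f s s) (n : ℕ) : ContDiffOn ℝ k f^[n] s := by
  induction n with
  | zero => exact contDiffOn_id
  | succ n ih =>
    rw [iterate_succ']
    exact hf.comp ih (hs.iterate n)

open Finset in
theorem hasDerivWithinAt_iterate {f : ℝ → ℝ} {s : Set ℝ} (hf : DifferentiableOn ℝ f s)
    (hs : MapsTo f s s) {x : ℝ} (hx : x ∈ s) (n : ℕ) :
    HasDerivWithinAt f^[n] (∏ j ∈ range n, derivWithin f s (f^[j] x)) s x := by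
  induction n with
  | zero => simpa using hasDerivWithinAt_id x s
  | succ n ih =>
    rw [iterate_succ', prod_range_succ, mul_comm]
    exact (hf _ (hs.iterate n hx)).hasDerivWithinAt.comp x ih (hs.iterate n)

theorem mapsTo_Icc_of_mapsTo_Ioc {f : ℝ → ℝ} {a z : ℝ} (haz : a ≤ z)
    (hf : MapsTo f (Ioc a z) (Ioc a z)) (hfa : f a = a) : MapsTo f (Icc a z) (Icc a z) := by
  intro x hx
  rcases hx.1.eq_or_lt with rfl | h
  · rw [hfa]; exact ⟨le_rfl, haz⟩
  · exact Ioc_subset_Icc_self (hf ⟨h, hx.2⟩)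

theorem tendsto_iterate_of_lt_self {f : ℝ → ℝ} {a z : ℝ} (hmaps : MapsTo f (Icc a z) (Icc a z))
    (hcont : ContinuousOn f (Icc a z)) (hfa : f a = a) (hlt : ∀ x ∈ Ioc a z, f x < x)
    {x : ℝ} (hx : x ∈ Icc a z) : Tendsto (fun n => f^[n] x) atTop (𝓝 a) := by
  have hmem : ∀ n, f^[n] x ∈ Icc a z := fun n => hmaps.iterate n hx
  have hanti : Antitone fun n => f^[n] x := by
    refine antitone_nat_of_succ_le fun n => ?_
    rw [iterate_succ_apply']
    rcases (hmem n).1.eq_or_lt with h | h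
    · rw [← h, hfa]
    · exact (hlt _ ⟨h, (hmem n).2⟩).le
  obtain ⟨l, hl⟩ : ∃ l, Tendsto (fun n => f^[n] x) atTop (𝓝 l) :=
    ⟨_, tendsto_atTop_ciInf hanti ⟨a, forall_mem_range.2 fun n => (hmem n).1⟩⟩
  have hlmem : l ∈ Icc a z := isClosed_Icc.mem_of_tendsto hl (Eventually.of_forall hmem)
  have hfl : f l = l := by
    have h1 := (hcont l hlmem).tendsto.comp (tendsto_nhdsWithin_iff.2 ⟨hl, .of_forall hmem⟩)
    have h2 := hl.comp (tendsto_add_atTop_nat 1)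
    simp only [comp_def, ← iterate_succ_apply' f] at h1
    exact tendsto_nhds_unique h1 h2
  rcases hlmem.1.eq_or_lt with h | h
  · rwa [← h] at hl
  · exact absurd hfl (hlt l ⟨h, hlmem.2⟩).ne

theorem exists_fixed_forall_lt_self_on_Ioc {f : ℝ → ℝ} {c y : ℝ} (hcy : c ≤ y)
    (hf : ContinuousOn f (Icc c y)) (hc : f c = c) (hy : f y < y) :
    ∃ a ∈ Ico c y, f a = a ∧ ∀ t ∈ Ioc a y, f t < t := by
  set S := {t ∈ Icc c y | f t = t}
  have hS : IsClosed S := by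
    have := (hf.sub continuousOn_id).preimage_isClosed_of_isClosed isClosed_Icc
      (isClosed_singleton (x := (0 : ℝ)))
    convert this using 1
    ext t
    simp [S, sub_eq_zero]
  have hSc : IsCompact S := isCompact_Icc.of_isClosed_subset hS fun t ht => ht.1
  have ha : sSup S ∈ S := hSc.sSup_mem ⟨c, ⟨le_rfl, hcy⟩, hc⟩
  have hay : sSup S < y := ha.1.2.lt_of_ne fun h => hy.ne (h ▸ ha.2)
  refine ⟨sSup S, ⟨ha.1.1, hay⟩, ha.2, fun t ht => ?_⟩
  by_contra! hle
  have hsub : Icc t y ⊆ Icc c y := Icc_subset_Icc_left (ha.1.1.trans ht.1.le)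
  obtain ⟨s, hs, hfs⟩ := isPreconnected_Icc.intermediate_value₂ (left_mem_Icc.2 ht.2)
    (right_mem_Icc.2 ht.2) continuousOn_id (hf.mono hsub) hle hy.le
  exact (le_csSup hSc.bddAbove ⟨hsub hs, hfs.symm⟩).not_gt (ht.1.trans_le hs.1)

theorem derivWithin_eq_one_of_tendsto_fixed {h : ℝ → ℝ} {s : Set ℝ} {a : ℝ} {u : ℕ → ℝ}
    (hd : DifferentiableWithinAt ℝ h s a) (hu : Tendsto u atTop (𝓝[s \ {a}] a)) (ha : h a = a)
    (hfix : ∀ n, h (u n) = u n) : derivWithin h s a = 1 := by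
  have hslope := (hasDerivWithinAt_iff_tendsto_slope.1 hd.hasDerivWithinAt).comp hu
  refine tendsto_nhds_unique hslope (tendsto_const_nhds.congr' ?_)
  filter_upwards [hu.eventually self_mem_nhdsWithin] with n hn
  rw [comp_apply, slope_def_field, hfix, ha, div_self (sub_ne_zero.2 hn.2)]

theorem mul_sub_le_image_sub_of_le_derivWithin {φ : ℝ → ℝ} {s : Set ℝ} {p q C : ℝ}
    (hsub : Icc p q ⊆ s) (hφ : DifferentiableOn ℝ φ s)
    (hC : ∀ x ∈ Icc p q, C ≤ derivWithin φ s x) :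
    ∀ x ∈ Icc p q, ∀ y ∈ Icc p q, x ≤ y → C * (y - x) ≤ φ y - φ x := by
  have hnhds : ∀ x ∈ Ioo p q, s ∈ 𝓝 x :=
    fun x hx => mem_of_superset (Ioo_mem_nhds hx.1 hx.2) (Ioo_subset_Icc_self.trans hsub)
  refine (convex_Icc p q).mul_sub_le_image_sub_of_le_deriv (hφ.continuousOn.mono hsub) ?_ ?_ <;>
    rw [interior_Icc]
  · exact fun x hx => ((hφ x (hsub (Ioo_subset_Icc_self hx))).differentiableAt
      (hnhds x hx)).differentiableWithinAt
  · intro x hx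
    rw [← derivWithin_of_mem_nhds (hnhds x hx)]
    exact hC x (Ioo_subset_Icc_self hx)

theorem not_bddAbove_range_of_add_le {u : ℕ → ℝ} {δ : ℝ} (hδ : 0 < δ)
    (hstep : ∀ n, u n + δ ≤ u (n + 1)) : ¬ BddAbove (range u) := by
  have hgrow : ∀ n : ℕ, u 0 + n * δ ≤ u n := by
    intro n
    induction n with
    | zero => simp
    | succ n ih => push_cast; linarith [hstep n]
  rintro ⟨B, hB⟩
  obtain ⟨n, hn⟩ := exists_nat_gt ((B - u 0) / δ)
  have := hB (mem_range_self n)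
  rw [div_lt_iff₀ hδ] at hn
  linarith [hgrow n]

theorem eqOn_id_of_iterate_expanding {h : ℝ → ℝ} {p q ρ : ℝ} (hρ : 0 < ρ)
    (hmaps : MapsTo h (Icc p q) (Icc p q))
    (hexp : ∀ M : ℕ, ∀ x ∈ Icc p q, ∀ y ∈ Icc p q, x ≤ y → ρ * (y - x) ≤ h^[M] y - h^[M] x) :
    EqOn h id (Icc p q) := by
  intro w hw
  by_contra hne
  change h w ≠ w at hne
  have hmem : ∀ M, h^[M] w ∈ Icc p q := fun M => hmaps.iterate M hw
  -- every step of the orbit of `w` moves by at least `ρ |h w - w|`, always in the same direction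
  rcases lt_or_gt_of_ne hne with hlt | hgt
  · refine not_bddAbove_range_of_add_le (u := fun M => -h^[M] w) (mul_pos hρ (sub_pos.2 hlt))
      (fun M => ?_) ⟨-p, forall_mem_range.2 fun M => neg_le_neg (hmem M).1⟩
    have := hexp M (h w) (hmaps hw) w hw hlt.le
    rw [iterate_succ_apply]
    linarith
  · refine not_bddAbove_range_of_add_le (u := fun M => h^[M] w) (mul_pos hρ (sub_pos.2 hgt))
      (fun M => ?_) ⟨q, forall_mem_range.2 fun M => (hmem M).2⟩
    have := hexp M w hw (h w) (hmaps hw) hgt.le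
    rw [iterate_succ_apply]
    linarith

theorem exists_le_exp_mul_abs_sub {F : ℝ → ℝ} {a b : ℝ} (hF : ContDiffOn ℝ 1 F (Icc a b))
    (hpos : ∀ x ∈ Icc a b, 0 < F x) :
    ∃ L : ℝ≥0, ∀ u ∈ Icc a b, ∀ v ∈ Icc a b, F u ≤ Real.exp (L * |u - v|) * F v := by
  obtain ⟨L, hL⟩ := (hF.log fun x hx => (hpos x hx).ne').exists_lipschitzOnWith one_ne_zero
    (convex_Icc a b) isCompact_Icc
  refine ⟨L, fun u hu v hv => ?_⟩
  have hdist := hL.dist_le_mul u hu v hv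
  rw [Real.dist_eq, Real.dist_eq] at hdist
  calc F u = Real.exp (Real.log (F u)) := (Real.exp_log (hpos u hu)).symm
    _ ≤ Real.exp (L * |u - v| + Real.log (F v)) :=
        Real.exp_le_exp.2 (by linarith [le_abs_self (Real.log (F u) - Real.log (F v))])
    _ = Real.exp (L * |u - v|) * F v := by rw [Real.exp_add, Real.exp_log (hpos v hv)]

section Kopell

open Finset

variable {f : ℝ → ℝ} {a z : ℝ}

theorem prod_le_exp_mul_prod_iterate {F : ℝ → ℝ} {L : ℝ≥0} (haz : a ≤ z)
    (hmono : MonotoneOn f (Icc a z)) (hmaps : MapsTo f (Icc a z) (Icc a z))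
    (hF : ∀ u ∈ Icc a z, ∀ v ∈ Icc a z, F u ≤ Real.exp (L * |u - v|) * F v)
    (hF0 : ∀ u ∈ Icc a z, 0 ≤ F u) {x u : ℝ} (hx : x ∈ Icc (f z) z) (hu : u ∈ Icc (f z) z)
    (n : ℕ) :
    ∏ j ∈ range n, F (f^[j] u) ≤ Real.exp (L * (z - a)) * ∏ j ∈ range n, F (f^[j] x) := by
  have hzJ : z ∈ Icc a z := right_mem_Icc.2 haz
  have hDJ : Icc (f z) z ⊆ Icc a z := Icc_subset_Icc_left (hmaps hzJ).1
  -- the `j`-th iterate maps `[f z, z]` into `[f^[j+1] z, f^[j] z]`, and these intervals are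
  -- disjoint, so the distances `|f^[j] u - f^[j] x|` have sum at most `z - a`
  have hstep : ∀ j, F (f^[j] u) ≤ Real.exp (L * (f^[j] z - f^[j + 1] z)) * F (f^[j] x) := by
    intro j
    have horbit : ∀ y ∈ Icc (f z) z, f^[j] y ∈ Icc (f^[j + 1] z) (f^[j] z) := fun y hy => by
      rw [iterate_succ_apply]
      exact ((hmono.iterate hmaps j).mono hDJ).mapsTo_Icc hy
    have hxj := horbit x hx
    have huj := horbit u hu
    have hsub : Icc (f^[j + 1] z) (f^[j] z) ⊆ Icc a z :=
      Icc_subset_Icc (hmaps.iterate (j + 1) hzJ).1 (hmaps.iterate j hzJ).2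
    refine (hF _ (hsub huj) _ (hsub hxj)).trans
      (mul_le_mul_of_nonneg_right (Real.exp_le_exp.2 (mul_le_mul_of_nonneg_left ?_ L.2))
        (hF0 _ (hsub hxj)))
    exact abs_sub_le_iff.2 ⟨by linarith [hxj.1, huj.2], by linarith [hxj.2, huj.1]⟩
  calc ∏ j ∈ range n, F (f^[j] u)
      ≤ ∏ j ∈ range n, (Real.exp (L * (f^[j] z - f^[j + 1] z)) * F (f^[j] x)) :=
        prod_le_prod (fun j _ => hF0 _ (hmaps.iterate j (hDJ hu))) fun j _ => hstep j
    _ = Real.exp (L * (z - f^[n] z)) * ∏ j ∈ range n, F (f^[j] x) := by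
        rw [prod_mul_distrib, ← Real.exp_sum, ← mul_sum, sum_range_sub' (fun j => f^[j] z),
          iterate_zero_apply]
    _ ≤ Real.exp (L * (z - a)) * ∏ j ∈ range n, F (f^[j] x) := by
        gcongr
        · exact prod_nonneg fun j _ => hF0 _ (hmaps.iterate j (hDJ hx))
        · exact (hmaps.iterate n hzJ).1

theorem derivWithin_mul_prod_eq_of_commute {s : Set ℝ} (hs : UniqueDiffOn ℝ s) {h : ℝ → ℝ}
    (hf : DifferentiableOn ℝ f s) (hfs : MapsTo f s s) (hh : DifferentiableOn ℝ h s)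
    (hhs : MapsTo h s s) (hcomm : ∀ x ∈ s, h (f x) = f (h x)) (n : ℕ) {x : ℝ} (hx : x ∈ s) :
    derivWithin h s (f^[n] x) * ∏ j ∈ range n, derivWithin f s (f^[j] x) =
      (∏ j ∈ range n, derivWithin f s (f^[j] (h x))) * derivWithin h s x := by
  have h₁ := (hh _ (hfs.iterate n hx)).hasDerivWithinAt.comp x
    (hasDerivWithinAt_iterate hf hfs hx n) (hfs.iterate n)
  have h₂ := (hasDerivWithinAt_iterate hf hfs (hhs hx) n).comp x (hh x hx).hasDerivWithinAt hhs
  exact (hs x hx).eq_deriv _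
    (h₁.congr_of_mem (fun y hy => (iterate_apply_comm_of_mapsTo hfs hcomm n y hy).symm) hx) h₂

theorem exp_neg_le_derivWithin_of_commute {h : ℝ → ℝ} {C : ℝ} (haz : a < z)
    (hf : DifferentiableOn ℝ f (Icc a z)) (hfIoc : MapsTo f (Ioc a z) (Ioc a z))
    (hfa : f a = a) (hf_lt : ∀ x ∈ Ioc a z, f x < x)
    (hf' : ∀ x ∈ Icc a z, 0 < derivWithin f (Icc a z) x)
    (hdist : ∀ n, ∀ x ∈ Icc (f z) z, ∀ u ∈ Icc (f z) z,
      ∏ j ∈ range n, derivWithin f (Icc a z) (f^[j] u) ≤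
        Real.exp C * ∏ j ∈ range n, derivWithin f (Icc a z) (f^[j] x))
    (hh : ContDiffOn ℝ 1 h (Icc a z)) (hh_mono : MonotoneOn h (Icc a z)) (hha : h a = a)
    (hh_fix : ∀ n, h (f^[n] z) = f^[n] z) (hcomm : ∀ x ∈ Icc a z, h (f x) = f (h x)) :
    ∀ x ∈ Icc (f z) z, Real.exp (-C) ≤ derivWithin h (Icc a z) x := by
  intro x hx
  have hJ := uniqueDiffOn_Icc haz
  have haJ : a ∈ Icc a z := left_mem_Icc.2 haz.le
  have hzJ : z ∈ Ioc a z := right_mem_Ioc.2 haz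
  have hfJ := mapsTo_Icc_of_mapsTo_Ioc haz.le hfIoc hfa
  have hhz : h z = z := hh_fix 0
  have hhJ : MapsTo h (Icc a z) (Icc a z) := by simpa [hha, hhz] using hh_mono.mapsTo_Icc
  have hDJ : Icc (f z) z ⊆ Icc a z := Icc_subset_Icc_left (hfIoc hzJ).1.le
  have hhx : h x ∈ Icc (f z) z := by
    simpa [hhz, show h (f z) = f z from hh_fix 1] using
      (hh_mono.mono hDJ).mapsTo_Icc hx
  have hd : DifferentiableOn ℝ h (Icc a z) := hh.differentiableOn one_ne_zero
  have h'a : derivWithin h (Icc a z) a = 1 := by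
    refine derivWithin_eq_one_of_tendsto_fixed (hd a haJ) (tendsto_nhdsWithin_iff.2 ⟨?_, ?_⟩)
      hha hh_fix
    · exact tendsto_iterate_of_lt_self hfJ hf.continuousOn hfa hf_lt (Ioc_subset_Icc_self hzJ)
    · exact .of_forall fun n =>
        ⟨Ioc_subset_Icc_self (hfIoc.iterate n hzJ), (hfIoc.iterate n hzJ).1.ne'⟩
  have hlim : Tendsto (fun n => derivWithin h (Icc a z) (f^[n] x)) atTop (𝓝 1) := by
    rw [← h'a]
    exact (hh.continuousOn_derivWithin hJ le_rfl a haJ).tendsto.comp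
      (tendsto_nhdsWithin_iff.2 ⟨tendsto_iterate_of_lt_self hfJ hf.continuousOn hfa hf_lt (hDJ hx),
        .of_forall fun n => hfJ.iterate n (hDJ hx)⟩)
  have hbound : ∀ n, Real.exp (-C) * derivWithin h (Icc a z) (f^[n] x) ≤
      derivWithin h (Icc a z) x := by
    intro n
    have hP : 0 < ∏ j ∈ range n, derivWithin f (Icc a z) (f^[j] (h x)) :=
      prod_pos fun j _ => hf' _ (hfJ.iterate j (hDJ hhx))
    refine le_of_mul_le_mul_right ?_ hP
    calc Real.exp (-C) * derivWithin h (Icc a z) (f^[n] x) *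
          ∏ j ∈ range n, derivWithin f (Icc a z) (f^[j] (h x))
        ≤ Real.exp (-C) * derivWithin h (Icc a z) (f^[n] x) *
          (Real.exp C * ∏ j ∈ range n, derivWithin f (Icc a z) (f^[j] x)) :=
          mul_le_mul_of_nonneg_left (hdist n x hx (h x) hhx)
            (mul_nonneg (Real.exp_pos _).le hh_mono.derivWithin_nonneg)
      _ = derivWithin h (Icc a z) (f^[n] x) *
          ∏ j ∈ range n, derivWithin f (Icc a z) (f^[j] x) := by
          rw [Real.exp_neg]; field_simp
      _ = derivWithin h (Icc a z) x *
          ∏ j ∈ range n, derivWithin f (Icc a z) (f^[j] (h x)) := by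
          rw [derivWithin_mul_prod_eq_of_commute hJ hf hfJ hd hhJ hcomm n (hDJ hx), mul_comm]
  simpa using le_of_tendsto' (hlim.const_mul (Real.exp (-C))) hbound

theorem kopell {g : ℝ → ℝ} (haz : a < z)
    (hf : ContDiffOn ℝ 2 f (Icc a z)) (hf' : ∀ x ∈ Icc a z, 0 < derivWithin f (Icc a z) x)
    (hfa : f a = a) (hf_lt : ∀ x ∈ Ioc a z, f x < x)
    (hg : ContDiffOn ℝ 1 g (Icc a z)) (hg_mono : MonotoneOn g (Icc a z))
    (hga : g a = a) (hgz : g z = z) (hcomm : ∀ x ∈ Icc a z, g (f x) = f (g x)) :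
    EqOn g id (Icc (f z) z) := by
  have hJ := uniqueDiffOn_Icc haz
  have hf1 : DifferentiableOn ℝ f (Icc a z) := hf.differentiableOn two_ne_zero
  have hf_mono : StrictMonoOn f (Icc a z) := strictMonoOn_of_hasDerivWithinAt_pos (convex_Icc a z)
    hf1.continuousOn (fun x hx => (hf1 x (interior_subset hx)).hasDerivWithinAt.mono
      interior_subset) fun x hx => hf' x (interior_subset hx)
  have hfIoc : MapsTo f (Ioc a z) (Ioc a z) := fun x hx =>
    ⟨hfa ▸ hf_mono (left_mem_Icc.2 haz.le) (Ioc_subset_Icc_self hx) hx.1,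
      (hf_lt x hx).le.trans hx.2⟩
  have hfJ := mapsTo_Icc_of_mapsTo_Ioc haz.le hfIoc hfa
  have hgJ : MapsTo g (Icc a z) (Icc a z) := by simpa [hga, hgz] using hg_mono.mapsTo_Icc
  have hg_fix : ∀ n, g (f^[n] z) = f^[n] z := fun n => by
    rw [iterate_apply_comm_of_mapsTo hfJ hcomm n z (right_mem_Icc.2 haz.le), hgz]
  have hDJ : Icc (f z) z ⊆ Icc a z := Icc_subset_Icc_left (hfIoc (right_mem_Ioc.2 haz)).1.le
  have hgD : MapsTo g (Icc (f z) z) (Icc (f z) z) := by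
    simpa [hgz, show g (f z) = f z from hg_fix 1] using (hg_mono.mono hDJ).mapsTo_Icc
  obtain ⟨L, hL⟩ := exists_le_exp_mul_abs_sub (hf.derivWithin hJ (by norm_num)) hf'
  have hexpand : ∀ M, ∀ x ∈ Icc (f z) z,
      Real.exp (-(L * (z - a))) ≤ derivWithin g^[M] (Icc a z) x := fun M =>
    exp_neg_le_derivWithin_of_commute haz hf1 hfIoc hfa hf_lt hf'
      (fun n x hx u hu => prod_le_exp_mul_prod_iterate haz.le hf_mono.monotoneOn hfJ hL
        (fun v hv => (hf' v hv).le) hx hu n)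
      (hg.iterate hgJ M) (hg_mono.iterate hgJ M) (iterate_fixed hga M)
      (fun n => iterate_fixed (hg_fix n) M)
      fun x hx => (iterate_apply_comm_of_mapsTo hgJ (fun y hy => (hcomm y hy).symm) M x hx).symm
  exact eqOn_id_of_iterate_expanding (Real.exp_pos _) hgD fun M =>
    mul_sub_le_image_sub_of_le_derivWithin hDJ
      ((hg.iterate hgJ M).differentiableOn one_ne_zero) (hexpand M)

end Kopell

namespace DiffeoIcoTwo

variable (ψ χ : DiffeoIcoTwo)

theorem invFun_zero : ψ.invFun 0 = 0 := by
  simpa [ψ.fixes_zero] using ψ.left_inv 0 ⟨le_rfl, one_pos⟩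

def symm : DiffeoIcoTwo :=
  ⟨ψ.invFun, ψ.toFun, ψ.mapsTo_inv, ψ.mapsTo, ψ.right_inv, ψ.left_inv, ψ.invFun_zero,
    ψ.contDiff_inv, ψ.contDiff⟩

def comp (φ ψ : DiffeoIcoTwo) : DiffeoIcoTwo where
  toFun x := φ.toFun (ψ.toFun x)
  invFun x := ψ.invFun (φ.invFun x)
  mapsTo := φ.mapsTo.comp ψ.mapsTo
  mapsTo_inv := ψ.mapsTo_inv.comp φ.mapsTo_inv
  left_inv x hx := by rw [φ.left_inv _ (ψ.mapsTo hx), ψ.left_inv x hx]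
  right_inv x hx := by rw [ψ.right_inv _ (φ.mapsTo_inv hx), φ.right_inv x hx]
  fixes_zero := by rw [ψ.fixes_zero, φ.fixes_zero]
  contDiff := φ.contDiff.comp ψ.contDiff ψ.mapsTo
  contDiff_inv := ψ.contDiff_inv.comp φ.contDiff_inv φ.mapsTo_inv

theorem injOn : InjOn ψ.toFun (Ico 0 1) :=
  LeftInvOn.injOn fun x hx => ψ.left_inv x hx

theorem strictMonoOn : StrictMonoOn ψ.toFun (Ico 0 1) := by
  intro x hx y hy hxy
  have hsub : Icc 0 y ⊆ Ico 0 1 := Icc_subset_Ico_right hy.2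
  refine ContinuousOn.strictMonoOn_of_injOn_Icc hy.1 ?_ (ψ.contDiff.continuousOn.mono hsub)
    (ψ.injOn.mono hsub) ⟨hx.1, hxy.le⟩ ⟨hy.1, le_rfl⟩ hxy
  rw [ψ.fixes_zero]
  exact (ψ.mapsTo hy).1

theorem derivWithin_pos {s : Set ℝ} (hs : s ⊆ Ico 0 1) {x : ℝ} (hx : x ∈ s)
    (hsx : UniqueDiffWithinAt ℝ s x) : 0 < derivWithin ψ.toFun s x := by
  have hd := ψ.contDiff.differentiableOn two_ne_zero
  rw [derivWithin_subset hs hsx (hd x (hs hx))]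
  have hchain :
      derivWithin ψ.invFun (Ico 0 1) (ψ.toFun x) * derivWithin ψ.toFun (Ico 0 1) x = 1 :=
    calc _ = derivWithin (ψ.invFun ∘ ψ.toFun) (Ico 0 1) x :=
          (derivWithin_comp x (ψ.contDiff_inv.differentiableOn two_ne_zero _ (ψ.mapsTo (hs hx)))
            (hd x (hs hx)) ψ.mapsTo).symm
      _ = derivWithin id (Ico 0 1) x :=
          derivWithin_congr (fun y hy => ψ.left_inv y hy) (ψ.left_inv x (hs hx))
      _ = 1 := derivWithin_id x _ (uniqueDiffOn_Ico 0 1 x (hs hx))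
  refine ψ.strictMonoOn.monotoneOn.derivWithin_nonneg.lt_of_ne fun h => ?_
  rw [← h, mul_zero] at hchain
  exact zero_ne_one hchain

theorem apply_eq_self_of_sq {x : ℝ} (hx : x ∈ Ico 0 1) (h : ψ.toFun (ψ.toFun x) = x) :
    ψ.toFun x = x :=
  ψ.strictMonoOn.eq_of_apply_apply_eq ψ.mapsTo hx h

variable {ψ χ}

theorem exists_apply_eq_of_sq_eq
    (hsq : ∀ x ∈ Ico (0 : ℝ) 1, χ.toFun (χ.toFun x) = ψ.toFun (ψ.toFun x))
    {y : ℝ} (hy : y ∈ Ico 0 1) (hψy : ψ.toFun y ≤ y) :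
    ∃ x₀ ∈ Icc (ψ.toFun (ψ.toFun y)) y, χ.toFun x₀ = ψ.toFun x₀ := by
  have hψ := ψ.strictMonoOn.monotoneOn
  have hχ := χ.strictMonoOn.monotoneOn
  have hsub : Icc (ψ.toFun (ψ.toFun y)) y ⊆ Ico 0 1 :=
    Icc_subset_Ico (ψ.mapsTo (ψ.mapsTo hy)).1 hy.2
  have hψc := ψ.contDiff.continuousOn.mono hsub
  have hχc := χ.contDiff.continuousOn.mono hsub
  have hψψy : ψ.toFun (ψ.toFun y) ≤ ψ.toFun y := hψ (ψ.mapsTo hy) hy hψy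
  have hy_mem : y ∈ Icc (ψ.toFun (ψ.toFun y)) y := ⟨hψψy.trans hψy, le_rfl⟩
  -- the crossing lies between `y` and whichever of `χ y`, `ψ y` is smaller
  rcases le_total (χ.toFun y) (ψ.toFun y) with h | h
  · have hχy_mem : χ.toFun y ∈ Icc (ψ.toFun (ψ.toFun y)) y :=
      ⟨hsq y hy ▸ hχ (χ.mapsTo hy) hy (h.trans hψy), h.trans hψy⟩
    exact isPreconnected_Icc.intermediate_value₂ hy_mem hχy_mem hχc hψc h
      (hsq y hy ▸ hψ (χ.mapsTo hy) (ψ.mapsTo hy) h)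
  · exact isPreconnected_Icc.intermediate_value₂ ⟨hψψy, hψy⟩ hy_mem hχc hψc
      (hsq y hy ▸ hχ (ψ.mapsTo hy) (χ.mapsTo hy) h) h

theorem symm_comp_apply_sq_comm
    (hsq : ∀ x ∈ Ico (0 : ℝ) 1, χ.toFun (χ.toFun x) = ψ.toFun (ψ.toFun x))
    {x : ℝ} (hx : x ∈ Ico 0 1) :
    ψ.invFun (χ.toFun (ψ.toFun (ψ.toFun x))) = ψ.toFun (ψ.toFun (ψ.invFun (χ.toFun x))) := by
  have hχx := χ.mapsTo hx
  rw [← hsq x hx, hsq _ hχx, ψ.left_inv _ (ψ.mapsTo hχx), ψ.right_inv _ hχx]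

theorem apply_eq_of_sq_eq_of_lt
    (hsq : ∀ x ∈ Ico (0 : ℝ) 1, χ.toFun (χ.toFun x) = ψ.toFun (ψ.toFun x))
    {y : ℝ} (hy : y ∈ Ico 0 1) (hψy : ψ.toFun y < y) : χ.toFun y = ψ.toFun y := by
  obtain ⟨a, ha, hψa, hψ_lt⟩ := exists_fixed_forall_lt_self_on_Ioc hy.1
    (ψ.contDiff.continuousOn.mono (Icc_subset_Ico_right hy.2)) ψ.fixes_zero hψy
  obtain ⟨x₀, hx₀, hχx₀⟩ := exists_apply_eq_of_sq_eq hsq hy hψy.le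
  have haI : a ∈ Ico 0 1 := ⟨ha.1, ha.2.trans hy.2⟩
  have hIoc : Ioc a y ⊆ Ico 0 1 := fun t ht => ⟨ha.1.trans ht.1.le, ht.2.trans_lt hy.2⟩
  have hψIoc : MapsTo ψ.toFun (Ioc a y) (Ioc a y) := fun t ht =>
    ⟨hψa ▸ ψ.strictMonoOn haI (hIoc ht) ht.1, (hψ_lt t ht).le.trans ht.2⟩
  have hax₀ : a < x₀ := (hψIoc (hψIoc ⟨ha.2, le_rfl⟩)).1.trans_le hx₀.1
  have hJ : Icc a x₀ ⊆ Ico 0 1 := Icc_subset_Ico ha.1 (hx₀.2.trans_lt hy.2)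
  have hJy : Ioc a x₀ ⊆ Ioc a y := Ioc_subset_Ioc_right hx₀.2
  have hx₀I : x₀ ∈ Ico 0 1 := hJ ⟨hax₀.le, le_rfl⟩
  have hχa : χ.toFun a = a := χ.apply_eq_self_of_sq haI (by rw [hsq a haI, hψa, hψa])
  have hkopell := kopell (f := (ψ.comp ψ).toFun) (g := (ψ.symm.comp χ).toFun) hax₀
    ((ψ.comp ψ).contDiff.mono hJ)
    (fun x hx => (ψ.comp ψ).derivWithin_pos hJ hx (uniqueDiffOn_Icc hax₀ x hx))
    (show ψ.toFun (ψ.toFun a) = a by rw [hψa, hψa])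
    (fun t ht => (hψ_lt _ (hψIoc (hJy ht))).trans (hψ_lt t (hJy ht)))
    (((ψ.symm.comp χ).contDiff.of_le one_le_two).mono hJ)
    ((ψ.symm.comp χ).strictMonoOn.monotoneOn.mono hJ)
    (show ψ.invFun (χ.toFun a) = a by rw [hχa]; simpa [hψa] using ψ.left_inv a haI)
    (show ψ.invFun (χ.toFun x₀) = x₀ by rw [hχx₀, ψ.left_inv x₀ hx₀I])
    fun t ht => symm_comp_apply_sq_comm hsq (hJ ht)
  have hfix : ψ.invFun (χ.toFun (ψ.toFun (ψ.toFun y))) = ψ.toFun (ψ.toFun y) :=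
    hkopell ⟨(ψ.comp ψ).strictMonoOn.monotoneOn hx₀I hy hx₀.2, hx₀.1⟩
  rw [symm_comp_apply_sq_comm hsq hy] at hfix
  have hχy := χ.mapsTo hy
  have hψχy : ψ.invFun (χ.toFun y) = y := ψ.injOn (ψ.mapsTo_inv hχy) hy
    (ψ.injOn (ψ.mapsTo (ψ.mapsTo_inv hχy)) (ψ.mapsTo hy) hfix)
  rw [← ψ.right_inv _ hχy, hψχy]

theorem symm_sq_eq_of_sq_eq
    (hsq : ∀ x ∈ Ico (0 : ℝ) 1, χ.toFun (χ.toFun x) = ψ.toFun (ψ.toFun x))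
    {x : ℝ} (hx : x ∈ Ico 0 1) : χ.invFun (χ.invFun x) = ψ.invFun (ψ.invFun x) := by
  have hw := ψ.mapsTo_inv (ψ.mapsTo_inv hx)
  calc χ.invFun (χ.invFun x)
      = χ.invFun (χ.invFun (χ.toFun (χ.toFun (ψ.invFun (ψ.invFun x))))) := by
        rw [hsq _ hw, ψ.right_inv _ (ψ.mapsTo_inv hx), ψ.right_inv x hx]
    _ = ψ.invFun (ψ.invFun x) := by rw [χ.left_inv _ (χ.mapsTo hw), χ.left_inv _ hw]

variable (ψ χ) in
theorem apply_eq_of_sq_eq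
    (hsq : ∀ x ∈ Ico (0 : ℝ) 1, χ.toFun (χ.toFun x) = ψ.toFun (ψ.toFun x))
    {y : ℝ} (hy : y ∈ Ico 0 1) : χ.toFun y = ψ.toFun y := by
  rcases lt_trichotomy (ψ.toFun y) y with hlt | heq | hgt
  · exact apply_eq_of_sq_eq_of_lt hsq hy hlt
  · rw [heq]
    exact χ.apply_eq_self_of_sq hy (by rw [hsq y hy, heq, heq])
  · -- `ψ⁻¹` moves `ψ y` down to `y`
    have hψy := ψ.mapsTo hy
    have h : χ.invFun (ψ.toFun y) = ψ.invFun (ψ.toFun y) :=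
      apply_eq_of_sq_eq_of_lt (ψ := ψ.symm) (χ := χ.symm) (fun x hx => symm_sq_eq_of_sq_eq hsq hx)
        hψy
        (show ψ.invFun (ψ.toFun y) < ψ.toFun y by rwa [ψ.left_inv y hy])
    rw [ψ.left_inv y hy] at h
    rw [← χ.right_inv _ hψy, h]

end DiffeoIcoTwo

/-- Kopell–Szekeres corollary: if a `C²` diffeomorphism `φ` of `[0,1)` commutes
with `ψ²`, then it commutes with `ψ`. -/
theorem commutes_with_sq_implies_commutes (ψ φ : DiffeoIcoTwo)
    (hcomm : ∀ x ∈ Set.Ico (0:ℝ) 1,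
      φ.toFun (ψ.toFun (ψ.toFun x)) = ψ.toFun (ψ.toFun (φ.toFun x))) :
    ∀ x ∈ Set.Ico (0:ℝ) 1, φ.toFun (ψ.toFun x) = ψ.toFun (φ.toFun x) := by
  intro x hx
  have hsq : ∀ t ∈ Ico (0 : ℝ) 1, (φ.comp (ψ.comp φ.symm)).toFun
      ((φ.comp (ψ.comp φ.symm)).toFun t) = ψ.toFun (ψ.toFun t) := fun t ht => by
    change φ.toFun (ψ.toFun (φ.invFun (φ.toFun (ψ.toFun (φ.invFun t))))) = _
    rw [φ.left_inv _ (ψ.mapsTo (φ.mapsTo_inv ht)), hcomm _ (φ.mapsTo_inv ht), φ.right_inv t ht]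
  have h := DiffeoIcoTwo.apply_eq_of_sq_eq ψ _ hsq (φ.mapsTo hx)
  change φ.toFun (ψ.toFun (φ.invFun (φ.toFun x))) = _ at h
  rwa [φ.left_inv x hx] at h
end

section
/- Let ψ be an orientation-preserving C² diffeomorphism of ℝ with nonempty fixed point set. Then the centralizer of ψ in the group of orientation-preserving C² diffeomorphisms of ℝ equals the centralizer of ψ². -/
/-!
Let `φ` commute with `ψ²`. Since `ψ` is increasing, `ψ` and `ψ²` have the same fixed points, and
the commutator `v = φ ψ φ⁻¹ ψ⁻¹` is a `C²` diffeomorphism that commutes with `ψ²`, fixes every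
fixed point of `ψ`, and satisfies `ψ v ψ⁻¹ = v⁻¹`; we show `v = id`. After reflecting by
`x ↦ -x` if necessary, a point not fixed by `ψ` lies in a component `I` of the complement of the
fixed points whose left end `α` is fixed. The relation `ψ v ψ⁻¹ = v⁻¹` forbids `v` to push all of
`I` in one direction, so `v` fixes some `p ∈ I`. As `ψ²` pushes all of `I` towards `α` or all of
it away, Kopell's lemma for `ψ^{±2}` and `v` on `[α, p]` gives `v = id` there, and commuting with
`ψ^{±2}` carries this to all of `I`.

Kopell's lemma: along the orbit of a `C²` contraction `f` of `(α, p]` the distortion of the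
iterates `f^[n]` is bounded, which bounds the derivative of every map commuting with `f` and fixing
`p`. Applied to all iterates of `v` and `v⁻¹`, this is incompatible with `v` moving a point.
-/

/-- An orientation-preserving `C²` diffeomorphism of the real line. -/
structure DiffTwoPlusR where
  toFun : ℝ → ℝ
  invFun : ℝ → ℝ
  left_inv : Function.LeftInverse invFun toFun
  right_inv : Function.RightInverse invFun toFun
  contDiff : ContDiff ℝ 2 toFun
  contDiff_inv : ContDiff ℝ 2 invFun
  strictMono : StrictMono toFun

open Set Filter Function Topology Real

namespace DiffTwoPlusR

attribute [coe] DiffTwoPlusR.toFun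

instance : CoeFun DiffTwoPlusR fun _ => ℝ → ℝ := ⟨DiffTwoPlusR.toFun⟩

variable (f g : DiffTwoPlusR)

def symm : DiffTwoPlusR where
  toFun := f.invFun
  invFun := f.toFun
  left_inv := f.right_inv
  right_inv := f.left_inv
  contDiff := f.contDiff_inv
  contDiff_inv := f.contDiff
  strictMono a b hab := f.strictMono.lt_iff_lt.1 <| by rwa [f.right_inv a, f.right_inv b]

def comp : DiffTwoPlusR where
  toFun := f ∘ g
  invFun := g.invFun ∘ f.invFun
  left_inv := f.left_inv.comp g.left_inv
  right_inv := f.right_inv.comp g.right_inv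
  contDiff := f.contDiff.comp g.contDiff
  contDiff_inv := g.contDiff_inv.comp f.contDiff_inv
  strictMono := f.strictMono.comp g.strictMono

def negConj : DiffTwoPlusR where
  toFun x := -f (-x)
  invFun x := -f.invFun (-x)
  left_inv x := by simp only [neg_neg]; rw [f.left_inv, neg_neg]
  right_inv x := by simp only [neg_neg]; rw [f.right_inv, neg_neg]
  contDiff := contDiff_neg.comp (f.contDiff.comp contDiff_neg)
  contDiff_inv := contDiff_neg.comp (f.contDiff_inv.comp contDiff_neg)
  strictMono _ _ hab := neg_lt_neg (f.strictMono (neg_lt_neg hab))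

@[simp] theorem symm_apply_apply (x : ℝ) : f.symm (f x) = x := f.left_inv x

@[simp] theorem apply_symm_apply (x : ℝ) : f (f.symm x) = x := f.right_inv x

@[simp] theorem symm_symm : f.symm.symm = f := rfl

@[simp] theorem comp_apply (x : ℝ) : f.comp g x = f (g x) := rfl

@[simp] theorem symm_comp_apply (x : ℝ) : (f.comp g).symm x = g.symm (f.symm x) := rfl

@[simp] theorem negConj_apply (x : ℝ) : f.negConj x = -f (-x) := rfl

@[simp] theorem symm_negConj_apply (x : ℝ) : f.negConj.symm x = -f.symm (-x) := rfl

protected theorem continuous : Continuous f := f.contDiff.continuous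

protected theorem differentiable : Differentiable ℝ f := f.contDiff.differentiable two_ne_zero

theorem symm_apply_eq_self {x : ℝ} (hx : f x = x) : f.symm x = x := by
  conv_lhs => rw [← hx]
  exact f.symm_apply_apply x

theorem deriv_pos (x : ℝ) : 0 < deriv f x := by
  have hchain : deriv f.symm (f x) * deriv f x = 1 := by
    rw [← deriv_comp x (f.symm.differentiable _) (f.differentiable x)]
    simp [show ⇑f.symm ∘ ⇑f = id from funext f.symm_apply_apply]
  exact f.strictMono.monotone.deriv_nonneg.lt_of_ne' (right_ne_zero_of_mul_eq_one hchain)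

theorem apply_eq_self_of_apply_apply_eq {x : ℝ} (hx : f (f x) = x) : f x = x := by
  by_contra hne
  rcases lt_or_gt_of_ne hne with h | h <;>
  · have h' := f.strictMono h
    rw [hx] at h'
    exact lt_asymm h h'

theorem commute_symm_right {u : ℝ → ℝ} (h : Function.Commute u g) :
    Function.Commute u g.symm :=
  h.inverses_right g.right_inv g.left_inv

theorem commute_symm_left {u : ℝ → ℝ} (h : Function.Commute f u) :
    Function.Commute f.symm u :=
  (commute_symm_right f h.symm).symm

def toOrderIso : ℝ ≃o ℝ where
  toFun := f
  invFun := f.symm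
  left_inv := f.symm_apply_apply
  right_inv := f.apply_symm_apply
  map_rel_iff' := f.strictMono.le_iff_le

@[simp] theorem coe_toOrderIso : ⇑f.toOrderIso = f := rfl

end DiffTwoPlusR

theorem ContDiff.iterate {n : WithTop ℕ∞} {f : ℝ → ℝ} (hf : ContDiff ℝ n f) :
    ∀ k : ℕ, ContDiff ℝ n f^[k]
  | 0 => contDiff_id
  | k + 1 => (hf.iterate k).comp hf

theorem deriv_iterate_eq_prod {f : ℝ → ℝ} (hf : Differentiable ℝ f) (x : ℝ) :
    ∀ n : ℕ, deriv f^[n] x = ∏ k ∈ Finset.range n, deriv f (f^[k] x)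
  | 0 => by simp
  | n + 1 => by
    rw [iterate_succ, deriv_comp x ((hf.iterate n) _) (hf x), deriv_iterate_eq_prod hf (f x) n,
      Finset.prod_range_succ']
    simp only [iterate_succ_apply, iterate_zero_apply]

theorem IsPreconnected.forall_lt_or_forall_lt_of_ne {X α : Type*} [TopologicalSpace X]
    [LinearOrder α] [TopologicalSpace α] [OrderClosedTopology α] {s : Set X}
    (hs : IsPreconnected s) {f g : X → α} (hf : ContinuousOn f s) (hg : ContinuousOn g s)
    (hne : ∀ x ∈ s, f x ≠ g x) : (∀ x ∈ s, f x < g x) ∨ (∀ x ∈ s, g x < f x) := by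
  by_contra! h
  obtain ⟨⟨a, ha, hga⟩, ⟨b, hb, hfb⟩⟩ := h
  obtain ⟨x, hx, hfg⟩ := hs.intermediate_value₂ hb ha hf hg hfb hga
  exact hne x hx hfg

section Iterate

variable {f : ℝ → ℝ} {α p x : ℝ}

theorem iterate_mem_Icc_of_map_le (hf : Monotone f) (hα : f α = α) (hx : α ≤ x)
    (hfx : f x ≤ x) (n : ℕ) : f^[n] x ∈ Icc α x :=
  ⟨iterate_fixed hα n ▸ hf.iterate n hx, hf.antitone_iterate_of_map_le hfx (Nat.zero_le n)⟩

theorem tendsto_iterate_of_lt_self_s5 (hf : Continuous f) (hmono : Monotone f) (hα : f α = α)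
    (hx : α ≤ x) (hlt : ∀ y ∈ Ioc α x, f y < y) : Tendsto (fun n => f^[n] x) atTop (𝓝 α) := by
  have hfx : f x ≤ x := hx.eq_or_lt.elim (fun h => h ▸ hα.le) fun h => (hlt x ⟨h, le_rfl⟩).le
  have hmem := iterate_mem_Icc_of_map_le hmono hα hx hfx
  have hlim := tendsto_atTop_ciInf (hmono.antitone_iterate_of_map_le hfx)
    ⟨α, forall_mem_range.2 fun n => (hmem n).1⟩
  have hL := isClosed_Icc.mem_of_tendsto hlim (Eventually.of_forall hmem)
  have hfL := isFixedPt_of_tendsto_iterate hlim hf.continuousAt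
  obtain hαL | hαL := hL.1.eq_or_lt
  · rwa [← hαL] at hlim
  · exact absurd hfL (hlt _ ⟨hαL, hL.2⟩).ne

theorem exists_fixedPt_forall_Ioc_ne (hf : Continuous f) {a b : ℝ} (hab : a ≤ b)
    (ha : f a = a) :
    ∃ c ∈ Icc a b, f c = c ∧ ∀ y ∈ Ioc c b, f y ≠ y := by
  obtain ⟨c, ⟨hc, hfc⟩, hmax⟩ := IsCompact.exists_isGreatest
    (isCompact_Icc.inter_right (isClosed_eq hf continuous_id)) ⟨a, left_mem_Icc.2 hab, ha⟩
  exact ⟨c, hc, hfc, fun y hy hfy => hy.1.not_ge (hmax ⟨⟨hc.1.trans hy.1.le, hy.2⟩, hfy⟩)⟩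

theorem exists_mem_Ioc_succ_of_tendsto {a : ℕ → ℝ} {y : ℝ} (ha : Tendsto a atTop (𝓝 α))
    (hy : α < y) (hy0 : y ≤ a 0) : ∃ j, y ∈ Ioc (a (j + 1)) (a j) := by
  classical
  have hex : ∃ n, a n < y := (ha.eventually (eventually_lt_nhds hy)).exists
  have hspec := Nat.find_spec hex
  obtain ⟨j, hj⟩ := Nat.exists_eq_succ_of_ne_zero (n := Nat.find hex) fun h0 => by
    rw [h0] at hspec; linarith
  rw [hj] at hspec
  exact ⟨j, hspec, not_lt.1 (Nat.find_min hex (by omega))⟩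

theorem apply_eq_of_commute_of_tendsto {u : ℝ → ℝ} (hu : Continuous u)
    (hcomm : Function.Commute f u) (hup : u p = p)
    (hlim : Tendsto (fun n => f^[n] p) atTop (𝓝 α)) : u α = α := by
  refine tendsto_nhds_unique ((hu.tendsto α).comp hlim) (hlim.congr fun n => ?_)
  rw [comp_apply, ← (hcomm.iterate_left n).eq, hup]

theorem deriv_eq_one_of_apply_eq {u : ℝ → ℝ} {a : ℕ → ℝ} (hu : DifferentiableAt ℝ u α)
    (ha : Tendsto a atTop (𝓝[≠] α)) (hα : u α = α) (hfix : ∀ n, u (a n) = a n) :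
    deriv u α = 1 := by
  refine tendsto_nhds_unique ((hasDerivAt_iff_tendsto_slope.1 hu.hasDerivAt).comp ha)
    (tendsto_const_nhds.congr' ?_)
  filter_upwards [ha.eventually eventually_mem_nhdsWithin] with n hn
  rw [comp_apply, slope_def_field, hfix, hα, div_self (sub_ne_zero.2 hn)]

end Iterate

section Distortion

variable {f : ℝ → ℝ} {α p : ℝ} {C : NNReal}

theorem deriv_iterate_le_mul_deriv_iterate (hf : Differentiable ℝ f)
    (hf' : ∀ x, 0 < deriv f x)
    (hlip : LipschitzOnWith C (fun x => log (deriv f x)) (Icc α p)) (hα : f α = α) {q : ℝ}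
    (hq : q ∈ Icc α p) (hfq : f q ≤ q) {x y : ℝ} (hx : x ∈ Icc (f q) q) (hy : y ∈ Icc (f q) q)
    (n : ℕ) : deriv f^[n] x ≤ exp (C * (p - α)) * deriv f^[n] y := by
  have hmono := (strictMono_of_deriv_pos hf').monotone
  have hexp : ∀ z, deriv f^[n] z = exp (∑ k ∈ Finset.range n, log (deriv f (f^[k] z))) := by
    intro z
    rw [exp_sum, deriv_iterate_eq_prod hf]
    exact Finset.prod_congr rfl fun k _ => (exp_log (hf' _)).symm
  have horbit := iterate_mem_Icc_of_map_le hmono hα hq.1 hfq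
  have hdomain : ∀ z ∈ Icc (f q) q, ∀ k, f^[k] z ∈ Icc (f^[k + 1] q) (f^[k] q) :=
    fun z hz k => ⟨iterate_succ_apply f k q ▸ hmono.iterate k hz.1, hmono.iterate k hz.2⟩
  have hstep : ∀ k, log (deriv f (f^[k] x))
      ≤ log (deriv f (f^[k] y)) + C * (f^[k] q - f^[k + 1] q) := by
    intro k
    have hsub : Icc (f^[k + 1] q) (f^[k] q) ⊆ Icc α p :=
      Icc_subset_Icc (horbit (k + 1)).1 ((horbit k).2.trans hq.2)
    calc log (deriv f (f^[k] x))
        ≤ log (deriv f (f^[k] y)) + dist (log (deriv f (f^[k] x))) (log (deriv f (f^[k] y))) := by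
          rw [Real.dist_eq]
          linarith [le_abs_self (log (deriv f (f^[k] x)) - log (deriv f (f^[k] y)))]
      _ ≤ log (deriv f (f^[k] y)) + C * dist (f^[k] x) (f^[k] y) := by
          gcongr; exact hlip.dist_le_mul _ (hsub (hdomain x hx k)) _ (hsub (hdomain y hy k))
      _ ≤ log (deriv f (f^[k] y)) + C * (f^[k] q - f^[k + 1] q) := by
          gcongr; exact dist_le_of_mem_Icc (hdomain x hx k) (hdomain y hy k)
  rw [hexp, hexp, ← exp_add, exp_le_exp]
  calc ∑ k ∈ Finset.range n, log (deriv f (f^[k] x))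
      ≤ ∑ k ∈ Finset.range n, (log (deriv f (f^[k] y)) + C * (f^[k] q - f^[k + 1] q)) :=
        Finset.sum_le_sum fun k _ => hstep k
    _ = ∑ k ∈ Finset.range n, log (deriv f (f^[k] y)) + C * (q - f^[n] q) := by
        rw [Finset.sum_add_distrib, ← Finset.mul_sum, Finset.sum_range_sub' (fun k => f^[k] q)]
        rfl
    _ ≤ C * (p - α) + ∑ k ∈ Finset.range n, log (deriv f (f^[k] y)) := by
        have : C * (q - f^[n] q) ≤ C * (p - α) :=
          mul_le_mul_of_nonneg_left (by linarith [(horbit n).1, hq.2]) C.2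
        linarith

theorem deriv_le_mul_deriv_apply_iterate (hf : Differentiable ℝ f)
    (hf' : ∀ x, 0 < deriv f x)
    (hlip : LipschitzOnWith C (fun x => log (deriv f x)) (Icc α p)) (hα : f α = α) {q : ℝ}
    (hq : q ∈ Icc α p) (hfq : f q ≤ q) {u : ℝ → ℝ} (hu : Differentiable ℝ u)
    (humono : Monotone u) (hcomm : Function.Commute f u) {y : ℝ} (hy : y ∈ Icc (f q) q)
    (huy : u y ∈ Icc (f q) q) (n : ℕ) : deriv u y ≤ exp (C * (p - α)) * deriv u (f^[n] y) := by
  have hchain : deriv u (f^[n] y) * deriv f^[n] y = deriv f^[n] (u y) * deriv u y := by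
    rw [← deriv_comp y (hu _) ((hf.iterate n) y), ← deriv_comp y ((hf.iterate n) _) (hu y),
      Function.Semiconj.comp_eq (hcomm.iterate_left n)]
  have hdist := deriv_iterate_le_mul_deriv_iterate hf hf' hlip hα hq hfq hy huy n
  have hpos : 0 < deriv f^[n] (u y) := by
    rw [deriv_iterate_eq_prod hf]
    exact Finset.prod_pos fun k _ => hf' _
  refine le_of_mul_le_mul_right ?_ hpos
  calc deriv u y * deriv f^[n] (u y) = deriv u (f^[n] y) * deriv f^[n] y := by
        rw [hchain, mul_comm]
    _ ≤ deriv u (f^[n] y) * (exp (C * (p - α)) * deriv f^[n] (u y)) :=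
        mul_le_mul_of_nonneg_left hdist humono.deriv_nonneg
    _ = exp (C * (p - α)) * deriv u (f^[n] y) * deriv f^[n] (u y) := by ring

theorem deriv_le_of_commute (hf : Differentiable ℝ f) (hf' : ∀ x, 0 < deriv f x)
    (hlip : LipschitzOnWith C (fun x => log (deriv f x)) (Icc α p)) (hα : f α = α)
    (hcontr : ∀ y ∈ Ioc α p, f y < y) {u : ℝ → ℝ} (hu : ContDiff ℝ 1 u) (humono : Monotone u)
    (hcomm : Function.Commute f u) (hup : u p = p) {y : ℝ} (hy : y ∈ Ioc α p) :
    deriv u y ≤ exp (C * (p - α)) := by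
  have hmono := strictMono_of_deriv_pos hf'
  have hαp : α < p := hy.1.trans_le hy.2
  have hlim := tendsto_iterate_of_lt_self_s5 hf.continuous hmono.monotone hα hαp.le hcontr
  have hfixed : ∀ n, u (f^[n] p) = f^[n] p := fun n => by
    rw [← (hcomm.iterate_left n).eq, hup]
  have hu'α : deriv u α = 1 := by
    refine deriv_eq_one_of_apply_eq (hu.differentiable one_ne_zero α)
      (tendsto_nhdsWithin_of_tendsto_nhds_of_eventually_within _ hlim (Eventually.of_forall
        fun n => ?_)) (apply_eq_of_commute_of_tendsto hu.continuous hcomm hup hlim) hfixed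
    exact (iterate_fixed hα n ▸ hmono.iterate n hαp).ne'
  obtain ⟨j, hj⟩ := exists_mem_Ioc_succ_of_tendsto hlim hy.1 hy.2
  have hq : f^[j] p ∈ Icc α p :=
    iterate_mem_Icc_of_map_le hmono.monotone hα hαp.le (hcontr p ⟨hαp, le_rfl⟩).le j
  have hfq : f (f^[j] p) = f^[j + 1] p := (iterate_succ_apply' f j p).symm
  have hbound := deriv_le_mul_deriv_apply_iterate hf hf' hlip hα hq
    (hcontr _ ⟨hy.1.trans_le hj.2, hq.2⟩).le (hu.differentiable one_ne_zero) humono hcomm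
    ⟨hfq ▸ hj.1.le, hj.2⟩ ⟨hfq ▸ hfixed (j + 1) ▸ humono hj.1.le, hfixed j ▸ humono hj.2⟩
  have hlimu : Tendsto (fun n => exp (C * (p - α)) * deriv u (f^[n] y)) atTop
      (𝓝 (exp (C * (p - α)))) := by
    have := ((hu.continuous_deriv le_rfl).tendsto α).comp (tendsto_iterate_of_lt_self_s5
      hf.continuous hmono.monotone hα hy.1.le fun z hz => hcontr z ⟨hz.1, hz.2.trans hy.2⟩)
    simpa [hu'α] using this.const_mul (exp (C * (p - α)))
  exact ge_of_tendsto' hlimu hbound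

end Distortion

theorem OrderIso.le_self_of_iterate_sub_le (w : ℝ ≃o ℝ) {α p K x : ℝ} (hα : w α = α)
    (hK : ∀ n : ℕ, ∀ c ∈ Icc α p, ∀ y ∈ Icc α p, c ≤ y → (⇑w)^[n] y - (⇑w)^[n] c ≤ K * (y - c))
    (hx : x ∈ Icc α p) : w x ≤ x := by
  by_contra! hxw
  obtain ⟨c, hc, hwc, hfree⟩ := exists_fixedPt_forall_Ioc_ne w.continuous hx.1 hα
  have hcx : c < x := hc.2.lt_of_ne (by rintro rfl; exact hxw.ne' hwc)
  have hup : ∀ y ∈ Ioc c x, y < w y :=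
    (isPreconnected_Ioc.forall_lt_or_forall_lt_of_ne continuousOn_id w.continuous.continuousOn
      fun y hy => (hfree y hy).symm).resolve_right fun h => (h x ⟨hcx, le_rfl⟩).not_gt hxw
  have hdown : ∀ y ∈ Ioc c x, w.symm y < y := fun y hy => by
    simpa using w.symm.strictMono (hup y hy)
  have hwc' : w.symm c = c := w.symm_apply_eq.2 hwc.symm
  have hlim := tendsto_iterate_of_lt_self_s5 w.symm.continuous w.symm.monotone hwc' hc.2 hdown
  have hmem := iterate_mem_Icc_of_map_le w.symm.monotone hwc' hc.2 (hdown x ⟨hcx, le_rfl⟩).le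
  -- `w^[n]` fixes `c` and carries `w.symm^[n] x → c` back to `x`, against the slope bound
  have hbound : ∀ n, x - c ≤ K * ((⇑w.symm)^[n] x - c) := fun n => by
    have hsub : Icc c x ⊆ Icc α p := Icc_subset_Icc hc.1 hx.2
    have := hK n c (hsub (left_mem_Icc.2 hcx.le)) _ (hsub (hmem n)) (hmem n).1
    rwa [(RightInverse.iterate w.apply_symm_apply n) x, iterate_fixed hwc n] at this
  have hlimK : Tendsto (fun n => K * ((⇑w.symm)^[n] x - c)) atTop (𝓝 0) := by
    simpa using (hlim.sub_const c).const_mul K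
  linarith [ge_of_tendsto' hlimK hbound]

namespace DiffTwoPlusR

/-- **Kopell's lemma**. -/
theorem eqOn_id_of_commute (f v : DiffTwoPlusR) (hcomm : Function.Commute f v) {α p : ℝ}
    (hα : f α = α) (hcontr : ∀ y ∈ Ioc α p, f y < y) (hvp : v p = p) : EqOn v id (Icc α p) := by
  intro x hx
  obtain ⟨C, hlip⟩ : ∃ C, LipschitzOnWith C (fun x => log (deriv f x)) (Icc α p) :=
    ContDiffOn.exists_lipschitzOnWith
      ((f.contDiff.deriv' (n := 1)).log fun x => (f.deriv_pos x).ne').contDiffOn one_ne_zero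
      (convex_Icc α p) isCompact_Icc
  have hlim :=
    tendsto_iterate_of_lt_self_s5 f.continuous f.strictMono.monotone hα (hx.1.trans hx.2) hcontr
  have hslope : ∀ w : DiffTwoPlusR, Function.Commute f w → w p = p → ∀ n : ℕ,
      ∀ c ∈ Icc α p, ∀ y ∈ Icc α p, c ≤ y →
        (⇑w)^[n] y - (⇑w)^[n] c ≤ exp (C * (p - α)) * (y - c) := by
    intro w hw hwp n
    have hwn : ContDiff ℝ 2 (⇑w)^[n] := w.contDiff.iterate n
    refine (convex_Icc α p).image_sub_le_mul_sub_of_deriv_le hwn.continuous.continuousOn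
      (hwn.differentiable two_ne_zero).differentiableOn fun y hy => ?_
    rw [interior_Icc] at hy
    exact deriv_le_of_commute f.differentiable f.deriv_pos hlip hα hcontr (hwn.of_le one_le_two)
      (w.strictMono.iterate n).monotone (hw.iterate_right n) (iterate_fixed hwp n)
      (Ioo_subset_Ioc_self hy)
  have hvα := apply_eq_of_commute_of_tendsto v.continuous hcomm hvp hlim
  have hle := v.toOrderIso.le_self_of_iterate_sub_le hvα (hslope v hcomm hvp) hx
  have hge := v.symm.toOrderIso.le_self_of_iterate_sub_le (v.symm_apply_eq_self hvα)
    (hslope v.symm (v.commute_symm_right hcomm) (v.symm_apply_eq_self hvp)) hx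
  exact le_antisymm hle (by simpa using v.strictMono.monotone hge)

theorem eqOn_id_of_commute_of_lt (g v : DiffTwoPlusR) (hcomm : Function.Commute g v)
    {α p q : ℝ} (hα : g α = α) (hlt : ∀ y ∈ Ioc α q, g y < y) (hp : p ∈ Ioc α q)
    (hvp : v p = p) : EqOn v id (Ioc α q) := by
  intro x hx
  have hid := eqOn_id_of_commute g v hcomm hα (fun y hy => hlt y ⟨hy.1, hy.2.trans hp.2⟩) hvp
  have hlim := tendsto_iterate_of_lt_self_s5 g.continuous g.strictMono.monotone hα hx.1.le
    fun y hy => hlt y ⟨hy.1, hy.2.trans hx.2⟩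
  obtain ⟨n, hn⟩ := (hlim.eventually (eventually_lt_nhds hp.1)).exists
  have hαn : α ≤ g^[n] x := iterate_fixed hα n ▸ g.strictMono.monotone.iterate n hx.1.le
  apply (g.strictMono.iterate n).injective
  rw [(hcomm.iterate_left n).eq]
  exact hid ⟨hαn, hn.le⟩

end DiffTwoPlusR

/-- When `f α = α`, this is the component `(α, β)` of `{y | f y ≠ y}` to the right of `α`. -/
def fixedPointFreeIoi (f : ℝ → ℝ) (α : ℝ) : Set ℝ := {y | α < y ∧ ∀ z ∈ Ioc α y, f z ≠ z}

section FixedPointFreeIoi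

variable {f : ℝ → ℝ} {α y : ℝ}

theorem Ioc_subset_fixedPointFreeIoi (hy : y ∈ fixedPointFreeIoi f α) :
    Ioc α y ⊆ fixedPointFreeIoi f α :=
  fun _ hz => ⟨hz.1, fun w hw => hy.2 w ⟨hw.1, hw.2.trans hz.2⟩⟩

theorem isPreconnected_fixedPointFreeIoi : IsPreconnected (fixedPointFreeIoi f α) :=
  OrdConnected.isPreconnected
    ⟨fun _ ha _ hb _ hz => Ioc_subset_fixedPointFreeIoi hb ⟨ha.1.trans_le hz.1, hz.2⟩⟩

theorem apply_ne_of_mem_fixedPointFreeIoi (hy : y ∈ fixedPointFreeIoi f α) : f y ≠ y :=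
  hy.2 y ⟨hy.1, le_rfl⟩

theorem DiffTwoPlusR.mapsTo_symm_fixedPointFreeIoi (g : DiffTwoPlusR)
    (hcomm : Function.Commute f g) (hα : g α = α) :
    MapsTo g.symm (fixedPointFreeIoi f α) (fixedPointFreeIoi f α) := by
  rintro y ⟨hαy, hfree⟩
  refine ⟨g.symm_apply_eq_self hα ▸ g.symm.strictMono hαy, fun z hz hfz => hfree (g z) ⟨?_, ?_⟩
    (by rw [hcomm z, hfz])⟩
  · simpa [hα] using g.strictMono hz.1
  · simpa using g.strictMono.monotone hz.2

end FixedPointFreeIoi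

namespace DiffTwoPlusR

theorem exists_apply_eq_of_conj_eq_symm (ψ v : DiffTwoPlusR)
    (hconj : ∀ y, ψ (v (ψ.symm y)) = v.symm y) {I : Set ℝ} (hI : IsPreconnected I)
    (hψI : MapsTo ψ.symm I I) {x : ℝ} (hx : x ∈ I) : ∃ p ∈ I, v p = p := by
  by_contra! hne
  rcases hI.forall_lt_or_forall_lt_of_ne v.continuous.continuousOn continuousOn_id hne with
    hlt | hgt
  · have h₁ : v.symm x < x := by
      rw [← hconj]; simpa using ψ.strictMono (hlt _ (hψI hx))
    have h₂ : x < v.symm x := by simpa using v.symm.strictMono (hlt x hx)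
    exact lt_asymm h₁ h₂
  · have h₁ : x < v.symm x := by
      rw [← hconj]; simpa using ψ.strictMono (hgt _ (hψI hx))
    have h₂ : v.symm x < x := by simpa using v.symm.strictMono (hgt x hx)
    exact lt_asymm h₁ h₂

theorem eqOn_id_of_conj_eq_symm (ψ v : DiffTwoPlusR) (hcomm : Function.Commute (ψ.comp ψ) v)
    (hconj : ∀ y, ψ (v (ψ.symm y)) = v.symm y) {α : ℝ} (hα : ψ α = α) :
    EqOn v id (fixedPointFreeIoi (ψ.comp ψ) α) := by
  intro x hx
  have hhα : ψ.comp ψ α = α := by simp [hα]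
  obtain ⟨p, hp, hvp⟩ := exists_apply_eq_of_conj_eq_symm ψ v hconj
    isPreconnected_fixedPointFreeIoi
    (ψ.mapsTo_symm_fixedPointFreeIoi (f := ψ.comp ψ) (fun _ => rfl) hα) hx
  have hsub := Ioc_subset_fixedPointFreeIoi (max_rec' (· ∈ fixedPointFreeIoi _ α) hx hp)
  have hpq : p ∈ Ioc α (max x p) := ⟨hp.1, le_max_right x p⟩
  suffices EqOn v id (Ioc α (max x p)) from this ⟨hx.1, le_max_left x p⟩
  rcases isPreconnected_fixedPointFreeIoi.forall_lt_or_forall_lt_of_ne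
      (ψ.comp ψ).continuous.continuousOn continuousOn_id
      (fun y hy => apply_ne_of_mem_fixedPointFreeIoi hy) with hlt | hgt
  · exact eqOn_id_of_commute_of_lt _ v hcomm hhα (fun y hy => hlt y (hsub hy)) hpq hvp
  · exact eqOn_id_of_commute_of_lt _ v ((ψ.comp ψ).commute_symm_left hcomm)
      ((ψ.comp ψ).symm_apply_eq_self hhα)
      (fun y hy => by simpa using (ψ.comp ψ).symm.strictMono (hgt y (hsub hy))) hpq hvp

def commutator (φ ψ : DiffTwoPlusR) : DiffTwoPlusR := φ.comp (ψ.comp (φ.symm.comp ψ.symm))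

variable {φ ψ : DiffTwoPlusR}

theorem commute_commutator (hφ : Function.Commute φ (ψ.comp ψ)) :
    Function.Commute (ψ.comp ψ) (φ.commutator ψ) :=
  hφ.symm.comp_right <| (show Function.Commute (ψ.comp ψ) ψ from fun _ => rfl).comp_right <|
    (φ.commute_symm_right hφ.symm).comp_right (ψ.commute_symm_right fun _ => rfl)

theorem apply_commutator_symm (hφ : Function.Commute φ (ψ.comp ψ)) (y : ℝ) :
    ψ (φ.commutator ψ (ψ.symm y)) = (φ.commutator ψ).symm y := by
  have := φ.commute_symm_left ((ψ.comp ψ).commute_symm_right hφ) y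
  simp only [commutator, comp_apply, symm_comp_apply, symm_symm] at this ⊢
  rw [this, apply_symm_apply]

theorem commutator_apply_eq_self_of_apply_apply_eq (hφ : Function.Commute φ (ψ.comp ψ)) {y : ℝ}
    (hy : ψ (ψ y) = y) : φ.commutator ψ y = y := by
  have hψy : ψ (φ.symm y) = φ.symm y := ψ.apply_eq_self_of_apply_apply_eq <| by
    simpa [hy] using (φ.commute_symm_left hφ y).symm
  simp [commutator, ψ.symm_apply_eq_self (ψ.apply_eq_self_of_apply_apply_eq hy), hψy]

theorem commute_negConj (hφ : Function.Commute φ (ψ.comp ψ)) :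
    Function.Commute φ.negConj (ψ.negConj.comp ψ.negConj) := fun x => by
  simpa using hφ (-x)

@[simp] theorem commutator_negConj_apply (x : ℝ) :
    φ.negConj.commutator ψ.negConj x = -φ.commutator ψ (-x) := by
  simp [commutator]

theorem commutator_apply_eq_self_of_le (hφ : Function.Commute φ (ψ.comp ψ)) {α z : ℝ}
    (hα : ψ α = α) (hαz : α ≤ z) : φ.commutator ψ z = z := by
  obtain ⟨c, hc, hcfix, hfree⟩ := exists_fixedPt_forall_Ioc_ne (ψ.comp ψ).continuous hαz
    (by simp [hα])
  obtain rfl | hcz := hc.2.eq_or_lt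
  · exact commutator_apply_eq_self_of_apply_apply_eq hφ hcfix
  · exact eqOn_id_of_conj_eq_symm ψ _ (commute_commutator hφ) (apply_commutator_symm hφ)
      (ψ.apply_eq_self_of_apply_apply_eq hcfix) ⟨hcz, hfree⟩

end DiffTwoPlusR

/-- If `ψ ∈ Diff²₊(ℝ)` has a fixed point, then its centralizer in `Diff²₊(ℝ)`
equals the centralizer of `ψ²`. -/
theorem centralizer_eq_centralizer_sq (ψ : DiffTwoPlusR)
    (hfix : ∃ x : ℝ, ψ.toFun x = x) :
    ∀ φ : DiffTwoPlusR,
      ((∀ x : ℝ, φ.toFun (ψ.toFun x) = ψ.toFun (φ.toFun x)) ↔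
       (∀ x : ℝ, φ.toFun (ψ.toFun (ψ.toFun x)) = ψ.toFun (ψ.toFun (φ.toFun x)))) := by
  intro φ
  refine ⟨fun h x => by rw [h, h], fun hφ => ?_⟩
  obtain ⟨x₀, hx₀⟩ := hfix
  have hcomm : ∀ z, φ.commutator ψ z = z := by
    intro z
    rcases le_total x₀ z with h | h
    · exact DiffTwoPlusR.commutator_apply_eq_self_of_le hφ hx₀ h
    · simpa using DiffTwoPlusR.commutator_apply_eq_self_of_le
        (DiffTwoPlusR.commute_negConj hφ) (α := -x₀) (by simp [hx₀]) (neg_le_neg h)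
  intro x
  simpa [DiffTwoPlusR.commutator] using hcomm (ψ (φ x))
end

section
/- Let G ≤ Homeo₊(ℝ) and let X ⊂ ℝ be a nonempty closed G-invariant set which is a locally Cantor set (perfect, totally disconnected, no isolated points) on which every G-orbit in X is dense. Suppose for every point a in the boundary of a complementary interval of X there is a sequence g_k ∈ G with g_k(a) pairwise distinct converging to a. Then the G-orbit of every point x ∈ ℝ \ X accumulates at a point of X. -/
/-- Orbits of points outside a locally Cantor minimal-like set accumulate on it. -/
theorem orbit_accumulates_on_locally_cantor_set
    (G : Subgroup (Equiv.Perm ℝ))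
    (hcont : ∀ g ∈ G, Continuous g)
    (hmono : ∀ g ∈ G, Monotone g)
    (X : Set ℝ) (hXne : X.Nonempty) (hXcl : IsClosed X)
    (hXinv : ∀ g ∈ G, ∀ x ∈ X, g x ∈ X)
    (hXperf : Perfect X) (hXtd : IsTotallyDisconnected X)
    (hdense : ∀ x ∈ X, X ⊆ closure {y : ℝ | ∃ g ∈ G, g x = y})
    (hbdry : ∀ a b : ℝ, a < b → a ∈ X → Set.Ioo a b ⊆ Xᶜ →
      ∃ g : ℕ → G, Function.Injective (fun k => (g k : Equiv.Perm ℝ) a) ∧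
        Filter.Tendsto (fun k => (g k : Equiv.Perm ℝ) a) Filter.atTop (nhds a)) :
    ∀ x : ℝ, x ∉ X → ∃ y ∈ X, ∃ g : ℕ → G,
      Filter.Tendsto (fun k => (g k : Equiv.Perm ℝ) x) Filter.atTop (nhds y) := by
  intro x hx
  -- basic facts
  have hinvmem : ∀ y : ℝ, ∀ g ∈ G, (g : Equiv.Perm ℝ) y ∈ X → y ∈ X := by
    intro y g hg hy
    have := hXinv g⁻¹ (G.inv_mem hg) _ hy
    simpa using this
  -- a global fixed point in X gives a contradiction
  have hfix : ∀ m ∈ X, (∀ g ∈ G, (g : Equiv.Perm ℝ) m = m) → False := by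
    intro m hm hfm
    have hsub : {y : ℝ | ∃ g ∈ G, (g : Equiv.Perm ℝ) m = y} ⊆ {m} := by
      rintro y ⟨g, hg, rfl⟩
      simp [hfm g hg]
    have h1 : X ⊆ ({m} : Set ℝ) := by
      intro z hz
      have := hdense m hm hz
      have h2 := closure_mono hsub this
      rwa [isClosed_singleton.closure_eq] at h2
    have hXeq : X = ({m} : Set ℝ) :=
      Set.Subset.antisymm h1 (Set.singleton_subset_iff.mpr hm)
    have hacc := hXperf.acc m hm
    rw [hXeq, accPt_iff_nhds] at hacc
    obtain ⟨y, hy, hne⟩ := hacc Set.univ Filter.univ_mem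
    exact hne hy.2
  -- X has no minimum
  have hmin : ∀ m ∈ X, (∀ z ∈ X, m ≤ z) → False := by
    intro m hm hle
    apply hfix m hm
    intro g hg
    have h1 : m ≤ g m := hle _ (hXinv g hg m hm)
    have h2 : m ≤ (g⁻¹ : Equiv.Perm ℝ) m := hle _ (hXinv g⁻¹ (G.inv_mem hg) m hm)
    have h3 : g m ≤ m := by
      have := hmono g hg h2
      simpa using this
    linarith
  -- X has no maximum
  have hmax : ∀ m ∈ X, (∀ z ∈ X, z ≤ m) → False := by
    intro m hm hle
    apply hfix m hm
    intro g hg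
    have h1 : g m ≤ m := hle _ (hXinv g hg m hm)
    have h2 : (g⁻¹ : Equiv.Perm ℝ) m ≤ m := hle _ (hXinv g⁻¹ (G.inv_mem hg) m hm)
    have h3 : m ≤ g m := by
      have := hmono g hg h2
      simpa using this
    linarith
  -- X has points below x and above x
  have hA : (X ∩ Set.Iic x).Nonempty := by
    by_contra h
    rw [Set.not_nonempty_iff_eq_empty, Set.eq_empty_iff_forall_notMem] at h
    have hbdd : BddBelow X := ⟨x, fun z hz => by
      by_contra hzx; push_neg at hzx; exact h z ⟨hz, hzx.le⟩⟩
    exact hmin _ (hXcl.csInf_mem hXne hbdd) fun z hz => csInf_le hbdd hz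
  have hB : (X ∩ Set.Ici x).Nonempty := by
    by_contra h
    rw [Set.not_nonempty_iff_eq_empty, Set.eq_empty_iff_forall_notMem] at h
    have hbdd : BddAbove X := ⟨x, fun z hz => by
      by_contra hzx; push_neg at hzx; exact h z ⟨hz, hzx.le⟩⟩
    exact hmax _ (hXcl.csSup_mem hXne hbdd) fun z hz => le_csSup hbdd hz
  -- the complementary interval (a, b) around x
  set a := sSup (X ∩ Set.Iic x) with ha_def
  set b := sInf (X ∩ Set.Ici x) with hb_def
  have hbddA : BddAbove (X ∩ Set.Iic x) := ⟨x, fun z hz => hz.2⟩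
  have hbddB : BddBelow (X ∩ Set.Ici x) := ⟨x, fun z hz => hz.2⟩
  have haMem : a ∈ X ∩ Set.Iic x :=
    (hXcl.inter isClosed_Iic).csSup_mem hA hbddA
  have hbMem : b ∈ X ∩ Set.Ici x :=
    (hXcl.inter isClosed_Ici).csInf_mem hB hbddB
  have haX : a ∈ X := haMem.1
  have hbX : b ∈ X := hbMem.1
  have hax : a < x := lt_of_le_of_ne haMem.2 (fun h => hx (by rw [← h]; exact haX))
  have hxb : x < b := lt_of_le_of_ne hbMem.2 (fun h => hx (by rw [h]; exact hbX))
  have hIoo : Set.Ioo a b ⊆ Xᶜ := by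
    intro t ht
    simp only [Set.mem_compl_iff]
    intro htX
    rcases le_or_gt t x with h | h
    · exact absurd (le_csSup hbddA ⟨htX, h⟩) (not_le.mpr ht.1)
    · exact absurd (csInf_le hbddB ⟨htX, le_of_lt h⟩) (not_le.mpr ht.2)
  obtain ⟨g, hinj, htend⟩ := hbdry a b (hax.trans hxb) haX hIoo
  have hgmem : ∀ k, ((g k : Equiv.Perm ℝ)) ∈ G := fun k => (g k).2
  -- images of the complementary interval are complementary intervals
  have hIook : ∀ k, Set.Ioo ((g k : Equiv.Perm ℝ) a) ((g k : Equiv.Perm ℝ) b) ⊆ Xᶜ := by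
    intro k t ht
    set s := ((g k : Equiv.Perm ℝ)).symm t with hs_def
    have hgs : (g k : Equiv.Perm ℝ) s = t := Equiv.apply_symm_apply _ _
    have hs1 : a < s := by
      by_contra h
      push_neg at h
      have := hmono _ (hgmem k) h
      rw [hgs] at this
      exact absurd ht.1 (not_lt.mpr this)
    have hs2 : s < b := by
      by_contra h
      push_neg at h
      have := hmono _ (hgmem k) h
      rw [hgs] at this
      exact absurd ht.2 (not_lt.mpr this)
    have hsX : s ∉ X := hIoo ⟨hs1, hs2⟩
    simp only [Set.mem_compl_iff]
    intro htX
    exact hsX (hinvmem s _ (hgmem k) (by rw [hgs]; exact htX))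
  have hkey : ∀ p q : ℕ, (g p : Equiv.Perm ℝ) a < (g q : Equiv.Perm ℝ) a →
      (g q : Equiv.Perm ℝ) a < (g p : Equiv.Perm ℝ) b → False := by
    intro p q h1 h2
    exact hIook p ⟨h1, h2⟩ (hXinv _ (hgmem q) a haX)
  have hsm : ∀ k, StrictMono ((g k : Equiv.Perm ℝ) : ℝ → ℝ) := fun k =>
    (hmono _ (hgmem k)).strictMono_of_injective (Equiv.injective _)
  have hab : ∀ k, (g k : Equiv.Perm ℝ) a < (g k : Equiv.Perm ℝ) b :=
    fun k => hsm k (hax.trans hxb)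
  -- lengths of the disjoint intervals tend to 0
  have hLtend : Filter.Tendsto
      (fun k => (g k : Equiv.Perm ℝ) b - (g k : Equiv.Perm ℝ) a)
      Filter.atTop (nhds 0) := by
    rw [Metric.tendsto_atTop]
    intro ε hε
    rw [Metric.tendsto_atTop] at htend
    obtain ⟨N, hN⟩ := htend (ε / 4) (by positivity)
    by_contra hcon
    push_neg at hcon
    obtain ⟨j, hjN, hj⟩ := hcon N
    obtain ⟨k, hkj, hk⟩ := hcon (j + 1)
    have hjk : j ≠ k := by omega
    have hkN : N ≤ k := by omega
    have hLj : ε ≤ (g j : Equiv.Perm ℝ) b - (g j : Equiv.Perm ℝ) a := by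
      have := hj
      rwa [Real.dist_eq, sub_zero, abs_of_nonneg (sub_nonneg.mpr (hab j).le)] at this
    have hLk : ε ≤ (g k : Equiv.Perm ℝ) b - (g k : Equiv.Perm ℝ) a := by
      have := hk
      rwa [Real.dist_eq, sub_zero, abs_of_nonneg (sub_nonneg.mpr (hab k).le)] at this
    have hdj : |(g j : Equiv.Perm ℝ) a - a| < ε / 4 := by
      have := hN j hjN; rwa [Real.dist_eq] at this
    have hdk : |(g k : Equiv.Perm ℝ) a - a| < ε / 4 := by
      have := hN k hkN; rwa [Real.dist_eq] at this
    obtain ⟨hdj1, hdj2⟩ := abs_lt.mp hdj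
    obtain ⟨hdk1, hdk2⟩ := abs_lt.mp hdk
    rcases lt_trichotomy ((g j : Equiv.Perm ℝ) a) ((g k : Equiv.Perm ℝ) a) with h | h | h
    · exact hkey j k h (by linarith)
    · exact hjk (hinj h)
    · exact hkey k j h (by linarith)
  have hvtend : Filter.Tendsto (fun k => (g k : Equiv.Perm ℝ) b)
      Filter.atTop (nhds a) := by
    have h := htend.add hLtend
    rw [add_zero] at h
    exact h.congr (fun k => by ring)
  refine ⟨a, haX, g, ?_⟩
  exact tendsto_of_tendsto_of_tendsto_of_le_of_le htend hvtend
    (fun k => hmono _ (hgmem k) hax.le) (fun k => hmono _ (hgmem k) hxb.le)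
end

section
/- Let G₁, G₂ be commuting subgroups of Homeo₊(ℝ), with G₁ simple and nonabelian, and suppose there is a nonempty closed G₂-invariant set X₂ contained in every nonempty closed G₂-invariant subset of ℝ. If some nontrivial element of G₁ has a fixed point, then X₂ ⊆ Fix(g) for every g ∈ G₁; in particular G₁ has a global fixed point. -/
/-- If `G₁, G₂ ≤ Homeo₊(ℝ)` commute elementwise, `G₁` is simple nonabelian,
`X₂` is a smallest nonempty closed `G₂`-invariant set, and some nontrivial element
of `G₁` has a fixed point, then `X₂ ⊆ Fix(g)` for every `g ∈ G₁`; in particular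
`G₁` has a global fixed point. -/
theorem commuting_simple_group_fixes_minimal_set
    (G₁ G₂ : Subgroup (Equiv.Perm ℝ))
    (hcont₁ : ∀ g ∈ G₁, Continuous g) (hmono₁ : ∀ g ∈ G₁, Monotone g)
    (hcont₂ : ∀ g ∈ G₂, Continuous g) (hmono₂ : ∀ g ∈ G₂, Monotone g)
    (hsimple : IsSimpleGroup G₁)
    (hna : ¬ ∀ a b : G₁, a * b = b * a)
    (hcomm : ∀ g ∈ G₁, ∀ k ∈ G₂, g * k = k * g)
    (X₂ : Set ℝ) (hne : X₂.Nonempty) (hcl : IsClosed X₂)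
    (hinv : ∀ k ∈ G₂, ∀ x ∈ X₂, k x ∈ X₂)
    (hmin : ∀ Y : Set ℝ, Y.Nonempty → IsClosed Y →
      (∀ k ∈ G₂, ∀ y ∈ Y, k y ∈ Y) → X₂ ⊆ Y)
    (hfix : ∃ g ∈ G₁, g ≠ 1 ∧ ∃ x : ℝ, g x = x) :
    (∀ g ∈ G₁, ∀ x ∈ X₂, g x = x) ∧ (∃ x : ℝ, ∀ g ∈ G₁, g x = x) := by
  obtain ⟨g₀, hg₀G, hg₀ne, x₀, hx₀⟩ := hfix
  -- Key: any element of G₁ with a fixed point fixes all of X₂.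
  have key : ∀ g ∈ G₁, (∃ x : ℝ, g x = x) → ∀ x ∈ X₂, g x = x := by
    rintro g hg ⟨y₀, hy₀⟩ x hx
    have hsub : X₂ ⊆ {y : ℝ | g y = y} := by
      apply hmin {y : ℝ | g y = y} ⟨y₀, hy₀⟩ (isClosed_eq (hcont₁ g hg) continuous_id)
      intro k hk y hy
      have hck := congrArg (fun p : Equiv.Perm ℝ => p y) (hcomm g hg k hk)
      simp only [Equiv.Perm.mul_apply] at hck
      simpa [Set.mem_setOf_eq.mp hy] using hck
    exact hsub hx
  -- The subgroup of G₁ of elements fixing X₂ pointwise.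
  set N : Subgroup G₁ :=
    { carrier := {g : G₁ | ∀ x ∈ X₂, (g : Equiv.Perm ℝ) x = x}
      one_mem' := by intro x hx; rfl
      mul_mem' := by
        intro a b ha hb x hx
        have : ((a : Equiv.Perm ℝ) * b) x = x := by
          rw [Equiv.Perm.mul_apply, hb x hx, ha x hx]
        simpa using this
      inv_mem' := by
        intro a ha x hx
        conv_lhs => rw [← ha x hx]
        simp } with hNdef
  have hNmem : ∀ g : G₁, g ∈ N ↔ ∀ x ∈ X₂, (g : Equiv.Perm ℝ) x = x := fun g => Iff.rfl
  have hNnormal : N.Normal := by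
    constructor
    intro n hn h
    rw [hNmem]
    intro x hx
    obtain ⟨z, hz⟩ := hne
    apply key _ (h * n * h⁻¹ : G₁).2
    · refine ⟨(h : Equiv.Perm ℝ) z, ?_⟩
      have : ((h : Equiv.Perm ℝ) * n * (h : Equiv.Perm ℝ)⁻¹) ((h : Equiv.Perm ℝ) z)
          = (h : Equiv.Perm ℝ) z := by
        simp [Equiv.Perm.mul_apply, hn z hz]
      simpa using this
    · exact hx
  have hNtop : N = ⊤ := by
    rcases hsimple.eq_bot_or_eq_top_of_normal N hNnormal with hbot | htop
    · exfalso
      have hmem : (⟨g₀, hg₀G⟩ : G₁) ∈ N := by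
        rw [hNmem]
        exact key g₀ hg₀G ⟨x₀, hx₀⟩
      rw [hbot, Subgroup.mem_bot] at hmem
      exact hg₀ne (by simpa using congrArg Subtype.val hmem)
    · exact htop
  have hall : ∀ g ∈ G₁, ∀ x ∈ X₂, g x = x := by
    intro g hg x hx
    have : (⟨g, hg⟩ : G₁) ∈ N := hNtop ▸ Subgroup.mem_top _
    exact (hNmem _).mp this x hx
  obtain ⟨z, hz⟩ := hne
  exact ⟨hall, z, fun g hg => hall g hg z hz⟩
end

section
/- Let h: S¹ → S¹ be a homeomorphism such that for every rotation R_t of the circle there exists a C¹ diffeomorphism f_t of S¹ with h ∘ R_t = f_t ∘ h. Then h is differentiable at every point of S¹ with nonvanishing derivative. -/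
/-!
The lift `H` is continuous and injective modulo `1`, hence strictly monotone on `[0, 1/2]` and,
by Lebesgue's theorem, differentiable at some point `x₀`. Conjugating the rotation by `x - x₀`
gives `H (y + (x - x₀)) = F (H y) + c` with `F` a `C¹` map with nonvanishing derivative, which
carries differentiability from `x₀` to `x` and multiplies the derivative by `F' (H x₀) ≠ 0`.
Finally `H' x₀ ≠ 0`, since otherwise `H' ≡ 0` and `H` would be constant.
-/

abbrev S1 : Type := AddCircle (1 : ℝ)

open Set MeasureTheory

theorem AddCircle.sub_eq_sub_of_coe_eq {X : Type*} [TopologicalSpace X] [PreconnectedSpace X]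
    {p : ℝ} {f g : X → ℝ} (hf : Continuous f) (hg : Continuous g)
    (hfg : ∀ x, (f x : AddCircle p) = g x) (x y : X) : f x - g x = f y - g y :=
  isPreconnected_univ.constant_of_mapsTo
    (isDiscrete_iff_discreteTopology.mpr
      (inferInstance : DiscreteTopology (AddSubgroup.zmultiples p)))
    (hf.sub hg).continuousOn (fun z _ => QuotientAddGroup.eq_iff_sub_mem.mp (hfg z))
    (mem_univ x) (mem_univ y)

theorem AddCircle.exists_add_const_of_semiconj {p : ℝ} {h f : AddCircle p → AddCircle p}
    {H F : ℝ → ℝ} (hH : Continuous H) (hF : Continuous F)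
    (hlift : ∀ x : ℝ, h x = H x) (hflift : ∀ x : ℝ, f x = F x) {t : ℝ}
    (hconj : ∀ x, h (x + t) = f (h x)) : ∃ c, ∀ y, H (y + t) = F (H y) + c := by
  refine ⟨H t - F (H 0), fun y => ?_⟩
  have hcoe : ∀ y : ℝ, (H (y + t) : AddCircle p) = F (H y) := fun y => by
    rw [← hlift, ← hflift, ← hlift, AddCircle.coe_add, hconj]
  have := sub_eq_sub_of_coe_eq (hH.comp (continuous_add_const t)) (hF.comp hH) hcoe y 0
  simp only [Function.comp_apply, zero_add] at this
  linarith

theorem hasDerivAt_add_of_eq_comp_add {H F : ℝ → ℝ} {t c d x : ℝ}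
    (hHF : ∀ y, H (y + t) = F (H y) + c) (hF : DifferentiableAt ℝ F (H x))
    (hH : HasDerivAt H d x) : HasDerivAt H (deriv F (H x) * d) (x + t) := by
  have hshift : HasDerivAt (fun y => H (y + t)) (deriv F (H x) * d) x := by
    simpa only [hHF, Function.comp_apply] using (hF.hasDerivAt.comp x hH).add_const c
  have hback := HasDerivAt.comp_sub_const (x + t) t (by rwa [add_sub_cancel_right])
  simp only [sub_add_cancel] at hback
  exact hback

theorem MonotoneOn.exists_differentiableAt {f : ℝ → ℝ} {a b : ℝ} (hab : a < b)
    (hf : MonotoneOn f (Ioo a b)) : ∃ x ∈ Ioo a b, DifferentiableAt ℝ f x := by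
  have hpos : volume (Ioo a b) ≠ 0 := by simp [hab]
  obtain ⟨x, hx, hdiff⟩ := Measure.exists_mem_of_measure_ne_zero_of_ae hpos
    (hf.locallyBoundedVariationOn.ae_differentiableWithinAt measurableSet_Ioo)
  exact ⟨x, hx, hdiff.differentiableAt (isOpen_Ioo.mem_nhds hx)⟩

theorem AntitoneOn.exists_differentiableAt {f : ℝ → ℝ} {a b : ℝ} (hab : a < b)
    (hf : AntitoneOn f (Ioo a b)) : ∃ x ∈ Ioo a b, DifferentiableAt ℝ f x := by
  obtain ⟨x, hx, hdiff⟩ := hf.neg.exists_differentiableAt hab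
  exact ⟨x, hx, by simpa using hdiff.neg⟩

theorem ContinuousOn.exists_differentiableAt_of_injOn {f : ℝ → ℝ} {a b : ℝ} (hab : a < b)
    (hf : ContinuousOn f (Icc a b)) (hinj : InjOn f (Icc a b)) :
    ∃ x ∈ Ioo a b, DifferentiableAt ℝ f x := by
  rcases hf.strictMonoOn_of_injOn_Icc' hab.le hinj with hmono | hanti
  · exact (hmono.monotoneOn.mono Ioo_subset_Icc_self).exists_differentiableAt hab
  · exact (hanti.antitoneOn.mono Ioo_subset_Icc_self).exists_differentiableAt hab

theorem conjugating_rotations_implies_differentiable_general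
    (h : Equiv.Perm S1)
    (H : ℝ → ℝ) (hHcont : Continuous H)
    (hlift : ∀ x : ℝ, h ((x : ℝ) : S1) = ((H x : ℝ) : S1))
    (hrot : ∀ t : ℝ, ∃ f : Equiv.Perm S1, ∃ Fl : ℝ → ℝ,
      ContDiff ℝ 1 Fl ∧ (∀ x : ℝ, deriv Fl x ≠ 0) ∧
      (∀ x : ℝ, f ((x : ℝ) : S1) = ((Fl x : ℝ) : S1)) ∧
      ∀ x : S1, h (x + ((t : ℝ) : S1)) = f (h x)) :
    ∀ x : ℝ, DifferentiableAt ℝ H x ∧ deriv H x ≠ 0 := by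
  have hinj : InjOn H (Icc 0 (1 / 2)) := fun a ha b hb hab => by
    have hmem : ∀ {y : ℝ}, y ∈ Icc (0 : ℝ) (1 / 2) → y ∈ Ico 0 (0 + 1) := fun hy =>
      ⟨hy.1, by linarith [hy.2]⟩
    refine (AddCircle.coe_eq_coe_iff_of_mem_Ico (hmem ha) (hmem hb)).mp (h.injective ?_)
    rw [hlift, hlift, hab]
  obtain ⟨x₀, -, hx₀⟩ :=
    hHcont.continuousOn.exists_differentiableAt_of_injOn (by norm_num) hinj
  have htransport : ∀ x, ∃ C ≠ 0, HasDerivAt H (C * deriv H x₀) x := fun x => by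
    obtain ⟨f, F, hFC1, hF', hflift, hconj⟩ := hrot (x - x₀)
    obtain ⟨c, hc⟩ := AddCircle.exists_add_const_of_semiconj hHcont hFC1.continuous hlift hflift
      hconj
    refine ⟨_, hF' (H x₀), ?_⟩
    simpa only [add_sub_cancel] using
      hasDerivAt_add_of_eq_comp_add hc ((hFC1.differentiable one_ne_zero) _) hx₀.hasDerivAt
  have hderiv_ne : deriv H x₀ ≠ 0 := fun hzero => by
    have hflat : ∀ x, HasDerivAt H 0 x := fun x => by
      obtain ⟨C, -, hC⟩ := htransport x
      simpa [hzero] using hC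
    have := hinj (by norm_num) (by norm_num) <| is_const_of_deriv_eq_zero
      (fun x => (hflat x).differentiableAt) (fun x => (hflat x).deriv) 0 (1 / 2)
    norm_num at this
  intro x
  obtain ⟨C, hC, hderiv⟩ := htransport x
  exact ⟨hderiv.differentiableAt, hderiv.deriv ▸ mul_ne_zero hC hderiv_ne⟩

/-- If a circle homeomorphism `h` conjugates every rotation into a `C¹`
diffeomorphism, then `h` is differentiable everywhere with nonvanishing
derivative (stated via a continuous lift `H` of `h`). -/
theorem conjugating_rotations_implies_differentiable
    (h : Equiv.Perm S1) (hcont : Continuous h)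
    (H : ℝ → ℝ) (hHcont : Continuous H)
    (hlift : ∀ x : ℝ, h ((x : ℝ) : S1) = ((H x : ℝ) : S1))
    (hrot : ∀ t : ℝ, ∃ f : Equiv.Perm S1, ∃ Fl : ℝ → ℝ,
      ContDiff ℝ 1 Fl ∧ (∀ x : ℝ, deriv Fl x ≠ 0) ∧
      (∀ x : ℝ, f ((x : ℝ) : S1) = ((Fl x : ℝ) : S1)) ∧
      ∀ x : S1, h (x + ((t : ℝ) : S1)) = f (h x)) :
    ∀ x : ℝ, DifferentiableAt ℝ H x ∧ deriv H x ≠ 0 :=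
  conjugating_rotations_implies_differentiable_general h H hHcont hlift hrot
end

section
/- Let G be a simple nonabelian group acting on ℝ by orientation-preserving homeomorphisms such that every orbit is discrete and the action is nontrivial. Then there is a contradiction: no such action exists with all orbits discrete and some orbit infinite, since a discrete invariant closed set in ℝ yields a nontrivial homomorphism from G to ℤ. -/
/-!
The counting measure of an orbit `X` is `G`-invariant on intervals (the action is monotone),
and locally finite because `X` is closed and discrete. Its signed mass between `x` and `g • x`,
i.e. how many points of `X` the element `g` moves `x` across, is then a homomorphism `G → ℝ`.
A simple nonabelian group has no nontrivial homomorphism to an abelian group, so every `g` fixes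
`x` and the orbit is a single point.
-/

open Set MeasureTheory MulAction Pointwise

noncomputable def signedIntervalMeasure (μ : Measure ℝ) (a b : ℝ) : ℝ :=
  μ.real (Ioc a b) - μ.real (Ioc b a)

namespace signedIntervalMeasure

variable {μ : Measure ℝ}

lemma symm (a b : ℝ) : signedIntervalMeasure μ b a = -signedIntervalMeasure μ a b :=
  (neg_sub _ _).symm

lemma add [IsLocallyFiniteMeasure μ] (a b c : ℝ) :
    signedIntervalMeasure μ a b + signedIntervalMeasure μ b c = signedIntervalMeasure μ a c := by
  simpa [signedIntervalMeasure, intervalIntegral.integral_const'] using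
    intervalIntegral.integral_add_adjacent_intervals (f := fun _ => (1 : ℝ)) (μ := μ)
      intervalIntegrable_const intervalIntegrable_const

lemma pos_of_lt [IsLocallyFiniteMeasure μ] {a b : ℝ} (hab : a < b) (hb : μ {b} ≠ 0) :
    0 < signedIntervalMeasure μ a b := by
  have hb' : μ (Ioc a b) ≠ 0 := fun h0 =>
    hb (measure_mono_null (singleton_subset_iff.2 (right_mem_Ioc.2 hab)) h0)
  have hpos : 0 < μ.real (Ioc a b) := ENNReal.toReal_pos hb' measure_Ioc_lt_top.ne
  simpa [signedIntervalMeasure, Ioc_eq_empty_of_le hab.le] using hpos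

lemma eq_of_eq_zero [IsLocallyFiniteMeasure μ] {a b : ℝ} (ha : μ {a} ≠ 0) (hb : μ {b} ≠ 0)
    (h : signedIntervalMeasure μ a b = 0) : a = b := by
  rcases lt_trichotomy a b with hab | hab | hba
  · exact absurd h (pos_of_lt hab hb).ne'
  · exact hab
  · rw [← neg_eq_zero, ← symm] at h
    exact absurd h (pos_of_lt hba ha).ne'

end signedIntervalMeasure

noncomputable def translationHom {G : Type*} [Group G] [MulAction G ℝ] (μ : Measure ℝ)
    [IsLocallyFiniteMeasure μ]
    (hμ : ∀ (g : G) (a b : ℝ), μ (Ioc (g • a) (g • b)) = μ (Ioc a b)) (x : ℝ) :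
    G →* Multiplicative ℝ :=
  MonoidHom.mk' (fun g => .ofAdd (signedIntervalMeasure μ x (g • x))) fun g h => by
    have hinv : signedIntervalMeasure μ (g • x) (g • h • x) =
        signedIntervalMeasure μ x (h • x) := by
      simp only [signedIntervalMeasure, measureReal_def, hμ]
    rw [mul_smul, ← signedIntervalMeasure.add x (g • x), hinv]
    rfl

lemma IsSimpleGroup.monoidHom_eq_one {G A : Type*} [Group G] [CommGroup A] (hG : IsSimpleGroup G)
    (hna : ¬ ∀ a b : G, a * b = b * a) (φ : G →* A) : φ = 1 := by
  rcases hG.eq_bot_or_eq_top_of_normal φ.ker φ.normal_ker with hker | hker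
  · refine absurd (fun a b => ?_) hna
    apply (MonoidHom.ker_eq_bot_iff φ).mp hker
    rw [map_mul, map_mul, mul_comm]
  · exact MonoidHom.ext fun g => MonoidHom.mem_ker.mp (hker ▸ Subgroup.mem_top g)

lemma isFiniteMeasureOnCompacts_count_restrict {α : Type*} [TopologicalSpace α] [T2Space α]
    [MeasurableSpace α] [OpensMeasurableSpace α] [MeasurableSingletonClass α] {X : Set α}
    (hclosed : IsClosed X) (hdisc : IsDiscrete X) :
    IsFiniteMeasureOnCompacts (Measure.count.restrict X) :=
  ⟨fun K hK => by
    rw [Measure.restrict_apply hK.isClosed.measurableSet, Measure.count_apply_lt_top]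
    exact (hK.inter_right hclosed).finite (hdisc.mono inter_subset_right)⟩

lemma smul_Ioc_of_monotone {G : Type*} [Group G] [MulAction G ℝ]
    (hmono : ∀ g : G, Monotone (g • · : ℝ → ℝ)) (g : G) (a b : ℝ) :
    g • Ioc a b = Ioc (g • a) (g • b) :=
  ((MulAction.toPerm g).toOrderIso (hmono g) (hmono g⁻¹)).image_Ioc a b

lemma count_restrict_orbit_smul_Ioc {G : Type*} [Group G] [MulAction G ℝ]
    (hmono : ∀ g : G, Monotone (g • · : ℝ → ℝ)) (x : ℝ) (g : G) (a b : ℝ) :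
    Measure.count.restrict (orbit G x) (Ioc (g • a) (g • b)) =
      Measure.count.restrict (orbit G x) (Ioc a b) := by
  rw [Measure.restrict_apply measurableSet_Ioc, Measure.restrict_apply measurableSet_Ioc,
    ← Measure.count_injective_image (MulAction.injective g) (Ioc a b ∩ orbit G x), image_smul,
    smul_set_inter, smul_orbit, smul_Ioc_of_monotone hmono]

theorem no_simple_action_with_discrete_infinite_orbits_general
    (G : Subgroup (Equiv.Perm ℝ))
    (hmono : ∀ g ∈ G, Monotone g)
    (hsimple : IsSimpleGroup G)
    (hna : ¬ ∀ a b : G, a * b = b * a)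
    (hdisc : ∀ x : ℝ, IsClosed {y : ℝ | ∃ g ∈ G, g x = y} ∧
      DiscreteTopology {y : ℝ | ∃ g ∈ G, g x = y})
    (hinf : ∃ x : ℝ, {y : ℝ | ∃ g ∈ G, g x = y}.Infinite) :
    False := by
  obtain ⟨x, hx⟩ := hinf
  have horbit : {y : ℝ | ∃ g ∈ G, g x = y} = orbit G x :=
    ext fun _ => ⟨fun ⟨g, hg, h⟩ => ⟨⟨g, hg⟩, h⟩, fun ⟨g, h⟩ => ⟨g, g.2, h⟩⟩
  obtain ⟨hclosed, hdiscrete⟩ := horbit ▸ hdisc x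
  have hmono' : ∀ g : G, Monotone (g • · : ℝ → ℝ) := fun g => hmono g g.2
  have := isFiniteMeasureOnCompacts_count_restrict hclosed hdiscrete.isDiscrete
  have hμ : ∀ y ∈ orbit G x, Measure.count.restrict (orbit G x) {y} ≠ 0 := fun y hy => by
    simp [Measure.restrict_apply, hy]
  have hfix (g : G) : g • x = x := by
    have hφ := DFunLike.congr_fun (hsimple.monoidHom_eq_one hna
      (translationHom _ (count_restrict_orbit_smul_Ioc hmono' x) x)) g
    exact (signedIntervalMeasure.eq_of_eq_zero (hμ x (mem_orbit_self x))
      (hμ _ (mem_orbit x g)) (congrArg Multiplicative.toAdd hφ)).symm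
  refine hx (horbit ▸ (finite_singleton x).subset ?_)
  rintro _ ⟨g, rfl⟩
  exact hfix g

/-- A simple nonabelian group of orientation-preserving homeomorphisms of `ℝ`
cannot have all orbits closed and discrete with some orbit infinite. -/
theorem no_simple_action_with_discrete_infinite_orbits
    (G : Subgroup (Equiv.Perm ℝ))
    (hcont : ∀ g ∈ G, Continuous g)
    (hmono : ∀ g ∈ G, Monotone g)
    (hsimple : IsSimpleGroup G)
    (hna : ¬ ∀ a b : G, a * b = b * a)
    (hdisc : ∀ x : ℝ, IsClosed {y : ℝ | ∃ g ∈ G, g x = y} ∧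
      DiscreteTopology {y : ℝ | ∃ g ∈ G, g x = y})
    (hinf : ∃ x : ℝ, {y : ℝ | ∃ g ∈ G, g x = y}.Infinite) :
    False :=
  no_simple_action_with_discrete_infinite_orbits_general G hmono hsimple hna hdisc hinf
end
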